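/- arXiv:2310.20606 — 15 statements merged into one kernel-verified Lean document; each statement's English description precedes it below -/
import Mathlib

section
/- If Δ₁ and Δ₂ are bad shifts (i.e., no two inputs with the same h-value XOR to them), and h : {0,1}^n → {0,1}^2 maps to a 4-element codomain with unequal class sizes (unbalanced), then Δ₁ ⊕ Δ₂ is a good shift: there exist x, y with h(x) = h(y) and x ⊕ y = Δ₁ ⊕ Δ₂. -/
theorem stmt_0 (n : ℕ) (h : (Fin n → ZMod 2) → Fin 4)
    (hunb : ¬ ∀ a b : Fin 4, Nat.card {x : Fin n → ZMod 2 | h x = a}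
      = Nat.card {x : Fin n → ZMod 2 | h x = b})
    (Δ₁ Δ₂ : Fin n → ZMod 2)
    (hbad₁ : ¬ ∃ x y : Fin n → ZMod 2, h x = h y ∧ x + y = Δ₁)
    (hbad₂ : ¬ ∃ x y : Fin n → ZMod 2, h x = h y ∧ x + y = Δ₂) :
    ∃ x y : Fin n → ZMod 2, h x = h y ∧ x + y = Δ₁ + Δ₂ := by
  classical
  have hchar : ∀ z : Fin n → ZMod 2, z + z = 0 := fun z => funext fun i => by
    have : ∀ a : ZMod 2, a + a = 0 := by decide
    exact this (z i)
  have hchar2 : ∀ z w : Fin n → ZMod 2, z + (z + w) = w := by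
    intro z w; rw [← add_assoc, hchar, zero_add]
  by_cases hΔeq : Δ₁ = Δ₂
  · exact ⟨0, 0, rfl, by simp [hΔeq, hchar]⟩
  by_contra hbad₃
  apply hunb
  -- Δ's are nonzero
  have hne1 : Δ₁ ≠ 0 := fun h0 => hbad₁ ⟨0, 0, rfl, by simp [h0]⟩
  have hne2 : Δ₂ ≠ 0 := fun h0 => hbad₂ ⟨0, 0, rfl, by simp [h0]⟩
  -- key cancellation lemma
  have L : ∀ x y : Fin n → ZMod 2, h x = h y →
      (x + y = 0 ∨ x + y = Δ₁ ∨ x + y = Δ₂ ∨ x + y = Δ₁ + Δ₂) → x = y := by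
    intro x y hxy hV
    rcases hV with h0 | h1 | h2 | h3
    · have : y = x + (x + y) := (hchar2 x y).symm
      rw [h0, add_zero] at this; exact this.symm
    · exact absurd ⟨x, y, hxy, h1⟩ hbad₁
    · exact absurd ⟨x, y, hxy, h2⟩ hbad₂
    · exact absurd ⟨x, y, hxy, h3⟩ hbad₃
  -- helper for ZMod 2 pointwise arithmetic
  have key4 : ∀ a b c d : ZMod 2, a + b = c + d → a + c = b + d := by decide
  -- closure of V under addition
  have closure : ∀ v w : Fin n → ZMod 2,
      (v = 0 ∨ v = Δ₁ ∨ v = Δ₂ ∨ v = Δ₁ + Δ₂) →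
      (w = 0 ∨ w = Δ₁ ∨ w = Δ₂ ∨ w = Δ₁ + Δ₂) →
      (v + w = 0 ∨ v + w = Δ₁ ∨ v + w = Δ₂ ∨ v + w = Δ₁ + Δ₂) := by
    intro v w hv hw
    rcases hv with rfl | rfl | rfl | rfl <;> rcases hw with rfl | rfl | rfl | rfl <;>
      simp [hchar, hchar2, add_comm, add_left_comm, add_assoc]
  -- four distinct values cover Fin 4
  have cover : ∀ (x : Fin n → ZMod 2) (b : Fin 4),
      ∃ v : Fin n → ZMod 2, (v = 0 ∨ v = Δ₁ ∨ v = Δ₂ ∨ v = Δ₁ + Δ₂) ∧ h (x + v) = b := by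
    intro x b
    have sums : ∀ v w : Fin n → ZMod 2, (x + v) + (x + w) = v + w := by
      intro v w
      funext i
      have : ∀ a b c : ZMod 2, (a + b) + (a + c) = b + c := by decide
      exact this _ _ _
    have hd : ∀ v w : Fin n → ZMod 2,
        (v = 0 ∨ v = Δ₁ ∨ v = Δ₂ ∨ v = Δ₁ + Δ₂) →
        (w = 0 ∨ w = Δ₁ ∨ w = Δ₂ ∨ w = Δ₁ + Δ₂) →
        v ≠ w → h (x + v) ≠ h (x + w) := by
      intro v w hv hw hvw heq
      have := L _ _ heq (by rw [sums]; exact closure v w hv hw)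
      exact hvw (add_left_cancel this)
    have hne12 : Δ₁ ≠ Δ₁ + Δ₂ := fun he => hne2 (by
      rw [← hchar2 Δ₁ Δ₂, ← he, hchar])
    have hne21 : Δ₂ ≠ Δ₁ + Δ₂ := fun he => hne1 (by
      have : Δ₂ + Δ₂ = Δ₂ + (Δ₁ + Δ₂) := congrArg (fun z => Δ₂ + z) he
      rw [hchar] at this
      have h2 : Δ₂ + (Δ₁ + Δ₂) = Δ₁ := by
        funext i
        have : ∀ a b : ZMod 2, a + (b + a) = b := by decide
        exact this _ _
      rw [h2] at this; exact this.symm)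
    have h012 : (0 : Fin n → ZMod 2) ≠ Δ₁ + Δ₂ := fun he => hΔeq (by
      have : Δ₁ + 0 = Δ₁ + (Δ₁ + Δ₂) := congrArg (fun z => Δ₁ + z) he
      rw [add_zero, hchar2] at this; exact this)
    have d01 := hd 0 Δ₁ (Or.inl rfl) (Or.inr (Or.inl rfl)) (Ne.symm hne1)
    have d02 := hd 0 Δ₂ (Or.inl rfl) (Or.inr (Or.inr (Or.inl rfl))) (Ne.symm hne2)
    have d03 := hd 0 (Δ₁ + Δ₂) (Or.inl rfl) (Or.inr (Or.inr (Or.inr rfl))) h012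
    have d12 := hd Δ₁ Δ₂ (Or.inr (Or.inl rfl)) (Or.inr (Or.inr (Or.inl rfl))) hΔeq
    have d13 := hd Δ₁ (Δ₁ + Δ₂) (Or.inr (Or.inl rfl)) (Or.inr (Or.inr (Or.inr rfl))) hne12
    have d23 := hd Δ₂ (Δ₁ + Δ₂) (Or.inr (Or.inr (Or.inl rfl))) (Or.inr (Or.inr (Or.inr rfl))) hne21
    have dec : ∀ p q r s e : Fin 4, p ≠ q → p ≠ r → p ≠ s → q ≠ r → q ≠ s → r ≠ s →
        e = p ∨ e = q ∨ e = r ∨ e = s := by decide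
    rcases dec (h (x + 0)) (h (x + Δ₁)) (h (x + Δ₂)) (h (x + (Δ₁ + Δ₂))) b
        d01 d02 d03 d12 d13 d23 with he | he | he | he
    · exact ⟨0, Or.inl rfl, he.symm⟩
    · exact ⟨Δ₁, Or.inr (Or.inl rfl), he.symm⟩
    · exact ⟨Δ₂, Or.inr (Or.inr (Or.inl rfl)), he.symm⟩
    · exact ⟨Δ₁ + Δ₂, Or.inr (Or.inr (Or.inr rfl)), he.symm⟩
  -- now build injections between fibers
  have inj : ∀ a b : Fin 4,
      Nat.card {x : Fin n → ZMod 2 | h x = a} ≤ Nat.card {x : Fin n → ZMod 2 | h x = b} := by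
    intro a b
    have hinj : ∃ F : {x : Fin n → ZMod 2 | h x = a} → {x : Fin n → ZMod 2 | h x = b},
        Function.Injective F := by
      refine ⟨fun x => ⟨x.1 + Classical.choose (cover x.1 b),
        (Classical.choose_spec (cover x.1 b)).2⟩, ?_⟩
      rintro ⟨x, hx⟩ ⟨y, hy⟩ hxy
      have hxy' : x + Classical.choose (cover x b) = y + Classical.choose (cover y b) :=
        congrArg Subtype.val hxy
      have hvV := (Classical.choose_spec (cover x b)).1
      have hwV := (Classical.choose_spec (cover y b)).1
      have hxyV : x + y = Classical.choose (cover x b) + Classical.choose (cover y b) := by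
        funext i
        exact key4 _ _ _ _ (congrFun hxy' i)
      exact Subtype.ext (L x y (hx.trans hy.symm) (hxyV ▸ closure _ _ hvV hwV))
    obtain ⟨F, hF⟩ := hinj
    exact Nat.card_le_card_of_injective F hF
  exact fun a b => le_antisymm (inj a b) (inj b a)
end

section
/- If h : {0,1}^n → {0,1} is balanced (both fibers have size 2^(n-1)) and nonconstant with n ≥ 1, then there exists a linear subspace X of F₂ⁿ of dimension n−1 such that the restriction of h to X is unbalanced (the fibers of h restricted to X have different sizes). -/
open Finset

def La (n : ℕ) (a : Fin n → ZMod 2) : (Fin n → ZMod 2) →ₗ[ZMod 2] ZMod 2 where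
  toFun x := ∑ i, a i * x i
  map_add' x y := by simp [mul_add, Finset.sum_add_distrib]
  map_smul' c x := by simp [Finset.mul_sum, mul_left_comm]

@[simp] lemma La_apply (n : ℕ) (a x : Fin n → ZMod 2) : La n a x = ∑ i, a i * x i := rfl

lemma La_ker_finrank (n : ℕ) (a : Fin n → ZMod 2) (ha : a ≠ 0) :
    Module.finrank (ZMod 2) (LinearMap.ker (La n a)) = n - 1 := by
  have hz : ∀ s : ZMod 2, s ≠ 0 → s = 1 := by decide
  obtain ⟨i, hi⟩ : ∃ i, a i ≠ 0 := by
    by_contra hc; push_neg at hc; exact ha (funext hc)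
  have hsurj : Function.Surjective (La n a) := by
    intro c
    refine ⟨Pi.single i c, ?_⟩
    simp [Pi.single_apply, Finset.sum_ite_eq', mul_comm, hz _ hi]
  have hrange : LinearMap.range (La n a) = ⊤ := LinearMap.range_eq_top.mpr hsurj
  have h1 := LinearMap.finrank_range_add_finrank_ker (La n a)
  rw [hrange] at h1
  simp [Module.finrank_self, Module.finrank_fin_fun, finrank_top] at h1
  omega

lemma card_hyper (n : ℕ) (x : Fin n → ZMod 2) (hx : x ≠ 0) :
    (univ.filter fun a : Fin n → ZMod 2 => (∑ i, a i * x i) = 0).card = 2 ^ (n - 1) := by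
  classical
  have hz : ∀ s : ZMod 2, s ≠ 0 → s = 1 := by decide
  obtain ⟨i, hi⟩ : ∃ i, x i ≠ 0 := by
    by_contra hc; push_neg at hc; exact hx (funext hc)
  have hxi : x i = 1 := hz _ hi
  have hn : 1 ≤ n := Nat.one_le_iff_ne_zero.mpr (by rintro rfl; exact i.elim0)
  set e : Fin n → ZMod 2 := Pi.single i 1 with he
  have key : ∀ a : Fin n → ZMod 2,
      (∑ j, (a + e) j * x j) = (∑ j, a j * x j) + 1 := by
    intro a
    have h1 : ∑ j, e j * x j = 1 := by
      simp [he, Pi.single_apply, ite_mul, Finset.sum_ite_eq', hxi]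
    calc ∑ j, (a + e) j * x j = (∑ j, a j * x j) + ∑ j, e j * x j := by
          simp [add_mul, Finset.sum_add_distrib]
      _ = (∑ j, a j * x j) + 1 := by rw [h1]
  have hee : ∀ a : Fin n → ZMod 2, a + e + e = a := by
    intro a
    rw [add_assoc, he, ← Pi.single_add]
    have h11 : (1 : ZMod 2) + 1 = 0 := by decide
    rw [h11, Pi.single_zero, add_zero]
  have hcards : (univ.filter fun a : Fin n → ZMod 2 => (∑ i, a i * x i) = 0).card
      = (univ.filter fun a : Fin n → ZMod 2 => (∑ i, a i * x i) = 1).card := by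
    apply Finset.card_bij' (fun a _ => a + e) (fun a _ => a + e)
    · intro a ha
      simp only [mem_filter, mem_univ, true_and] at ha ⊢
      rw [key a, ha]; decide
    · intro a ha
      simp only [mem_filter, mem_univ, true_and] at ha ⊢
      rw [key a, ha]; decide
    · intro a _; exact hee a
    · intro a _; exact hee a
  have htot : (univ.filter fun a : Fin n → ZMod 2 => (∑ i, a i * x i) = 0).card
      + (univ.filter fun a : Fin n → ZMod 2 => (∑ i, a i * x i) = 1).card
      = 2 ^ n := by
    have h0 := Finset.card_filter_add_card_filter_not
      (s := (univ : Finset (Fin n → ZMod 2))) (p := fun a => (∑ i, a i * x i) = 0)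
    rw [Finset.card_univ] at h0
    have hcard : Fintype.card (Fin n → ZMod 2) = 2 ^ n := by simp
    rw [hcard] at h0
    rw [← h0]
    congr 1
    apply congrArg Finset.card
    apply Finset.filter_congr
    intro a _
    have h2 : ∀ s : ZMod 2, s = 1 ↔ (¬ s = 0) := by decide
    exact h2 _
  have h3 : n - 1 + 1 = n := by clear hcards htot; omega
  have h2 : 2 ^ (n - 1) * 2 = 2 ^ n := by
    calc 2 ^ (n - 1) * 2 = 2 ^ (n - 1 + 1) := (pow_succ 2 (n - 1)).symm
      _ = 2 ^ n := by rw [h3]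
  clear hz key hee hxi hi he
  generalize hc0 : (univ.filter fun a : Fin n → ZMod 2 => (∑ i, a i * x i) = 0).card = c0
    at hcards htot ⊢
  generalize hc1 : (univ.filter fun a : Fin n → ZMod 2 => (∑ i, a i * x i) = 1).card = c1
    at hcards htot
  clear hc0 hc1 hx x e
  omega

lemma natCard_set {α : Type*} [Fintype α] (p : α → Prop) [DecidablePred p] :
    Nat.card {x | p x} = (univ.filter p).card := by
  rw [Nat.card_eq_fintype_card]
  simp [Set.coe_setOf, Fintype.card_subtype]

lemma sum_g (n : ℕ) (h : (Fin n → ZMod 2) → Bool) (A : Finset (Fin n → ZMod 2)) :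
    ∑ x ∈ A, (if h x = true then (1 : ℤ) else -1)
      = ((A.filter fun x => h x = true).card : ℤ)
        - ((A.filter fun x => h x = false).card : ℤ) := by
  classical
  rw [← Finset.sum_filter_add_sum_filter_not A (fun x => h x = true)]
  have e1 : A.filter (fun x => ¬ h x = true) = A.filter (fun x => h x = false) := by
    apply Finset.filter_congr; intro x _; simp [Bool.not_eq_true]
  rw [e1]
  have h1 : ∑ x ∈ A.filter (fun x => h x = true), (if h x = true then (1 : ℤ) else -1)
      = ((A.filter fun x => h x = true).card : ℤ) := by
    rw [Finset.sum_congr rfl (fun x hx => by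
      simp only [Finset.mem_filter] at hx; rw [if_pos hx.2]), Finset.sum_const,
      nsmul_eq_mul, mul_one]
  have h2 : ∑ x ∈ A.filter (fun x => h x = false), (if h x = true then (1 : ℤ) else -1)
      = -((A.filter fun x => h x = false).card : ℤ) := by
    rw [Finset.sum_congr rfl (fun x hx => by
      simp only [Finset.mem_filter] at hx
      rw [if_neg (by simp [hx.2])]), Finset.sum_const, nsmul_eq_mul, mul_neg_one]
  rw [h1, h2]; ring

theorem stmt_2 (n : ℕ) (hn : 1 ≤ n) (h : (Fin n → ZMod 2) → Bool)
    (hbal₁ : Nat.card {x : Fin n → ZMod 2 | h x = true} = 2 ^ (n - 1))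
    (hbal₂ : Nat.card {x : Fin n → ZMod 2 | h x = false} = 2 ^ (n - 1))
    (hnc : ∃ x y : Fin n → ZMod 2, h x ≠ h y) :
    ∃ X : Submodule (ZMod 2) (Fin n → ZMod 2),
      Module.finrank (ZMod 2) X = n - 1 ∧
      Nat.card {x : Fin n → ZMod 2 | x ∈ X ∧ h x = true}
        ≠ Nat.card {x : Fin n → ZMod 2 | x ∈ X ∧ h x = false} := by
  classical
  by_contra hcon
  push_neg at hcon
  set g : (Fin n → ZMod 2) → ℤ := fun x => if h x = true then 1 else -1 with hg
  -- global balance as a sum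
  have hT : (univ.filter fun x : Fin n → ZMod 2 => h x = true).card = 2 ^ (n - 1) := by
    rw [← hbal₁, natCard_set]
  have hF : (univ.filter fun x : Fin n → ZMod 2 => h x = false).card = 2 ^ (n - 1) := by
    rw [← hbal₂, natCard_set]
  have hsum_univ : ∑ x : Fin n → ZMod 2, g x = 0 := by
    rw [hg]
    rw [sum_g n h univ, hT, hF, sub_self]
  -- each hyperplane sum is zero
  have hker : ∀ a : Fin n → ZMod 2,
      ∑ x ∈ univ.filter (fun x : Fin n → ZMod 2 => (∑ i, a i * x i) = 0), g x = 0 := by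
    intro a
    by_cases ha : a = 0
    · subst ha
      have e0 : (univ.filter fun x : Fin n → ZMod 2 =>
          (∑ i, (0 : Fin n → ZMod 2) i * x i) = 0) = univ := by
        apply Finset.filter_true_of_mem; intro x _; simp
      rw [e0]; exact hsum_univ
    · have hc := hcon (LinearMap.ker (La n a)) (La_ker_finrank n a ha)
      have e1 : ∀ b : Bool, Nat.card {x | x ∈ LinearMap.ker (La n a) ∧ h x = b}
          = ((univ.filter (fun x : Fin n → ZMod 2 => (∑ i, a i * x i) = 0)).filter
              fun x => h x = b).card := by
        intro b
        rw [natCard_set, Finset.filter_filter]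
        apply congrArg Finset.card
        apply Finset.filter_congr
        intro x _
        rw [LinearMap.mem_ker, La_apply]
      rw [hg, sum_g n h, ← e1 true, ← e1 false, hc, sub_self]
  -- double counting
  have hlhs : ∑ a : Fin n → ZMod 2,
      ∑ x ∈ univ.filter (fun x : Fin n → ZMod 2 => (∑ i, a i * x i) = 0), g x = 0 :=
    Finset.sum_eq_zero fun a _ => hker a
  have hswap : ∑ a : Fin n → ZMod 2,
      ∑ x ∈ univ.filter (fun x : Fin n → ZMod 2 => (∑ i, a i * x i) = 0), g x
      = ∑ x : Fin n → ZMod 2,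
          (((univ.filter fun a : Fin n → ZMod 2 => (∑ i, a i * x i) = 0).card : ℤ) * g x) := by
    simp_rw [Finset.sum_filter]
    rw [Finset.sum_comm]
    refine Finset.sum_congr rfl fun x _ => ?_
    rw [← Finset.sum_filter, Finset.sum_const, nsmul_eq_mul]
  have hval : ∑ x : Fin n → ZMod 2,
      (((univ.filter fun a : Fin n → ZMod 2 => (∑ i, a i * x i) = 0).card : ℤ) * g x)
      = 2 ^ (n - 1) * g 0 := by
    rw [← Finset.add_sum_erase _ _ (Finset.mem_univ (0 : Fin n → ZMod 2))]
    have c0 : ((univ.filter fun a : Fin n → ZMod 2 =>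
        (∑ i, a i * (0 : Fin n → ZMod 2) i) = 0).card : ℤ) = 2 ^ n := by
      rw [Finset.filter_true_of_mem (fun a _ => by simp), Finset.card_univ]
      simp
    have crest : ∑ x ∈ univ.erase (0 : Fin n → ZMod 2),
        (((univ.filter fun a : Fin n → ZMod 2 => (∑ i, a i * x i) = 0).card : ℤ) * g x)
        = 2 ^ (n - 1) * ∑ x ∈ univ.erase (0 : Fin n → ZMod 2), g x := by
      rw [Finset.mul_sum]
      refine Finset.sum_congr rfl fun x hx => ?_
      rw [card_hyper n x (Finset.ne_of_mem_erase hx)]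
      push_cast
      ring
    have hrest : ∑ x ∈ univ.erase (0 : Fin n → ZMod 2), g x = -g 0 := by
      have := Finset.add_sum_erase univ g (Finset.mem_univ (0 : Fin n → ZMod 2))
      rw [hsum_univ] at this
      linarith
    rw [c0, crest, hrest]
    have h3 : (2 : ℤ) ^ n = 2 ^ (n - 1) * 2 := by
      rw [← pow_succ]
      congr 1
      exact (Nat.succ_pred_eq_of_pos hn).symm
    rw [h3]
    ring
  rw [hswap, hval] at hlhs
  have hpow : (2 : ℤ) ^ (n - 1) ≠ 0 := pow_ne_zero _ two_ne_zero
  have hg0 : g 0 = 1 ∨ g 0 = -1 := by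
    rw [hg]; cases h 0 <;> simp
  rcases hg0 with h0 | h0 <;> rw [h0] at hlhs <;> simp [hpow] at hlhs
end

section
/- Let D ⊆ F₂ⁿ be a set of vectors (the good shifts for some function h : F₂ⁿ → Fin 2^t), where goodness means Δ ∈ D iff there exist x, y with h(x)=h(y) and x+y=Δ. If the 2^t fibers of h do not coincide with the cosets of any (n−t)-dimensional subspace of F₂ⁿ, then the span of D has dimension at least n−t+1. -/
theorem stmt_3 (n t : ℕ) (ht : t ≤ n) (h : (Fin n → ZMod 2) → Fin (2 ^ t))
    (D : Set (Fin n → ZMod 2))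
    (hD : ∀ Δ, Δ ∈ D ↔ ∃ x y : Fin n → ZMod 2, h x = h y ∧ x + y = Δ)
    (hnc : ¬ ∃ L : Submodule (ZMod 2) (Fin n → ZMod 2),
      Module.finrank (ZMod 2) L = n - t ∧ ∀ x y : Fin n → ZMod 2, h x = h y ↔ x + y ∈ L) :
    n - t + 1 ≤ Module.finrank (ZMod 2) (Submodule.span (ZMod 2) D) := by
  by_contra hlt
  push_neg at hlt
  set V := Submodule.span (ZMod 2) D with hV
  have hdim : Module.finrank (ZMod 2) V ≤ n - t := by omega
  have hneg : ∀ a : Fin n → ZMod 2, -a = a := by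
    intro a; funext i; exact CharTwo.neg_eq _
  have hmem : ∀ x y : Fin n → ZMod 2, h x = h y → x + y ∈ V := by
    intro x y hxy
    exact Submodule.subset_span ((hD (x + y)).2 ⟨x, y, hxy, rfl⟩)
  set Q := (Fin n → ZMod 2) ⧸ V
  have hpi : ∀ x y : Fin n → ZMod 2, (Submodule.Quotient.mk x : Q) = Submodule.Quotient.mk y ↔ x + y ∈ V := by
    intro x y
    rw [Submodule.Quotient.eq, sub_eq_add_neg, hneg y]
  -- define g
  have hgex : ∀ i : Fin (2 ^ t), ∃ q : Q, ∀ x, h x = i → Submodule.Quotient.mk x = q := by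
    intro i
    by_cases hi : ∃ x, h x = i
    · obtain ⟨x0, hx0⟩ := hi
      exact ⟨Submodule.Quotient.mk x0, fun x hx => (hpi x x0).2 (hmem x x0 (by rw [hx, hx0]))⟩
    · exact ⟨Submodule.Quotient.mk 0, fun x hx => absurd ⟨x, hx⟩ hi⟩
  choose g hg using hgex
  have hgh : ∀ x, g (h x) = Submodule.Quotient.mk x := fun x => (hg (h x) x rfl).symm
  have hsurj : Function.Surjective g := by
    intro q
    obtain ⟨x, rfl⟩ := Submodule.Quotient.mk_surjective V q
    exact ⟨h x, hgh x⟩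
  have : Finite Q := Finite.of_surjective g hsurj
  have hQfin : Fintype Q := Fintype.ofFinite Q
  have hfd : FiniteDimensional (ZMod 2) (Fin n → ZMod 2) := by infer_instance
  have hrank : Module.finrank (ZMod 2) Q + Module.finrank (ZMod 2) V = n := by
    rw [Submodule.finrank_quotient_add_finrank]
    simp [Module.finrank_pi]
  have hcardQ : Fintype.card Q = 2 ^ Module.finrank (ZMod 2) Q := by
    have := Module.card_eq_pow_finrank (K := ZMod 2) (V := Q)
    simpa using this
  have hcard_le : Fintype.card Q ≤ 2 ^ t := by
    simpa using Fintype.card_le_of_surjective g hsurj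
  have hQge : t ≤ Module.finrank (ZMod 2) Q := by omega
  have hQle : Module.finrank (ZMod 2) Q ≤ t := by
    by_contra hc
    push_neg at hc
    have : 2 ^ t < 2 ^ Module.finrank (ZMod 2) Q := Nat.pow_lt_pow_right (by norm_num) hc
    omega
  have hQeq : Module.finrank (ZMod 2) Q = t := le_antisymm hQle hQge
  have hVeq : Module.finrank (ZMod 2) V = n - t := by omega
  have hcardeq : Fintype.card (Fin (2 ^ t)) = Fintype.card Q := by
    simp [hcardQ, hQeq]
  have hbij : Function.Bijective g :=
    (Fintype.bijective_iff_surjective_and_card g).2 ⟨hsurj, hcardeq⟩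
  apply hnc
  refine ⟨V, hVeq, fun x y => ⟨fun hxy => (hpi x y).1 ?_, fun hxy => ?_⟩⟩
  · rw [← hgh x, ← hgh y, hxy]
  · exact hbij.1 (by rw [hgh x, hgh y, (hpi x y).2 hxy])
end

section
/- Let h : F₂ⁿ → Fin (2^t) be a function with t ≤ n, and let G be the graph on F₂ⁿ where x ~ y iff x + y is a good shift (x ≠ y). Then every vertex of G has degree at least 2^(n−t) − 1. -/
/-!
Some fiber `S` of `h` has at least `2 ^ n / 2 ^ t = 2 ^ (n - t)` points (pigeonhole). Fix `u₀ ∈ S`: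
for every other `v ∈ S` the shift `u₀ + v` is good, so `x + u₀ + v` is a neighbour of `x`, and
these neighbours are pairwise distinct. Hence `x` has at least `|S| - 1` neighbours.
-/

open Finset

section GoodShift

variable {V β : Type*} [AddCommGroup V] [Module (ZMod 2) V]

def IsGoodShift (h : V → β) (Δ : V) : Prop :=
  ∃ u v, h u = h v ∧ u + v = Δ

def goodShiftNeighbors (h : V → β) (x : V) : Set V :=
  {y | y ≠ x ∧ IsGoodShift h (x + y)}

theorem add_add_mem_goodShiftNeighbors {h : V → β} {u₀ v : V} (huv : h u₀ = h v)
    (hne : v ≠ u₀) (x : V) : x + u₀ + v ∈ goodShiftNeighbors h x := by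
  have hx : x + (x + u₀ + v) = u₀ + v := by
    rw [← add_assoc, ← add_assoc, ZModModule.add_self, zero_add]
  refine ⟨fun hxy => hne ?_, u₀, v, huv, hx.symm⟩
  rw [hxy, ZModModule.add_self] at hx
  exact ((add_eq_zero_iff_eq_neg.mp hx.symm).trans (ZModModule.neg_eq_self v)).symm

theorem card_fiber_sub_one_le_card_goodShiftNeighbors [Fintype V] [DecidableEq β]
    (h : V → β) (x : V) (b : β) :
    #{v | h v = b} - 1 ≤ Nat.card (goodShiftNeighbors h x) := by
  classical
  set S : Finset V := {v | h v = b}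
  obtain hS | ⟨u₀, hu₀⟩ := S.eq_empty_or_nonempty
  · simp [hS]
  have hu₀b : h u₀ = b := (mem_filter.mp hu₀).2
  have hsub : (((S.erase u₀).image (x + u₀ + ·) : Finset V) : Set V) ⊆
      goodShiftNeighbors h x := by
    intro y hy
    obtain ⟨v, hv, rfl⟩ := mem_image.mp hy
    obtain ⟨hne, hvS⟩ := mem_erase.mp hv
    exact add_add_mem_goodShiftNeighbors (hu₀b.trans (mem_filter.mp hvS).2.symm) hne x
  calc #S - 1 = #((S.erase u₀).image (x + u₀ + ·)) := by
        rw [card_image_of_injective _ (add_right_injective _), card_erase_of_mem hu₀]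
    _ = Set.ncard (((S.erase u₀).image (x + u₀ + ·) : Finset V) : Set V) :=
        (Set.ncard_coe_finset _).symm
    _ ≤ Nat.card (goodShiftNeighbors h x) := by
        rw [Nat.card_coe_set_eq]
        exact Set.ncard_le_ncard hsub

end GoodShift

theorem stmt_4 (n t : ℕ) (ht : t ≤ n) (h : (Fin n → ZMod 2) → Fin (2 ^ t))
    (x : Fin n → ZMod 2) :
    2 ^ (n - t) - 1 ≤
      Nat.card {y : Fin n → ZMod 2 | y ≠ x ∧
        ∃ u v : Fin n → ZMod 2, h u = h v ∧ u + v = x + y} := by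
  have hcard : Fintype.card (Fin (2 ^ t)) * 2 ^ (n - t) ≤ Fintype.card (Fin n → ZMod 2) := by
    simp only [Fintype.card_fin, Fintype.card_fun, ZMod.card, ← pow_add, Nat.add_sub_cancel' ht,
      le_refl]
  obtain ⟨b, hb⟩ := Fintype.exists_le_card_fiber_of_mul_le_card h hcard
  exact (Nat.sub_le_sub_right hb 1).trans (card_fiber_sub_one_le_card_goodShiftNeighbors h x b)
end

section
/- For the partial function f_k on {0,1}^n defined by f_k(x)=0 if |x| ≤ k, f_k(x)=1 if |x| = n, undefined otherwise (with k < n), no adaptive parity decision tree of depth k computes f_k. Concretely: for any matrix S ∈ F₂^{k×n} there exists x ∈ F₂ⁿ with Hamming weight |x| ≤ k such that Sx = S·(1,…,1); hence any protocol making k parity queries cannot distinguish the all-ones input from some input of weight ≤ k. -/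
theorem stmt_6 (n k : ℕ) (hk : k < n) (S : Matrix (Fin k) (Fin n) (ZMod 2)) :
    ∃ x : Fin n → ZMod 2, hammingNorm x ≤ k ∧
      S.mulVec x = S.mulVec (fun _ => 1) := by
  classical
  set T := S.mulVecLin with hT
  set e : Fin n → ZMod 2 := fun _ => 1 with he
  -- the set of solutions
  set A : Finset (Fin n → ZMod 2) := Finset.univ.filter (fun x => T x = T e) with hA
  have heA : e ∈ A := by simp [hA]
  obtain ⟨x, hxA, hxmin⟩ := A.exists_min_image hammingNorm ⟨e, heA⟩
  have hxT : T x = T e := by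
    simpa [hA] using hxA
  refine ⟨x, ?_, hxT⟩
  -- minimality implies no nonzero kernel vector supported in supp x
  have hker : ∀ w ∈ LinearMap.ker T, (∀ i, x i = 0 → w i = 0) → w = 0 := by
    intro w hw hsupp
    by_contra hw0
    obtain ⟨j, hj⟩ := Function.ne_iff.mp hw0
    have hxw : T (x + w) = T e := by
      rw [map_add, LinearMap.mem_ker.mp hw, add_zero, hxT]
    have hmem : x + w ∈ A := by simp [hA, hxw]
    have hle := hxmin _ hmem
    -- but hammingNorm (x + w) < hammingNorm x
    have hsub : Finset.univ.filter (fun i => (x + w) i ≠ 0) ⊂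
        Finset.univ.filter (fun i => x i ≠ 0) := by
      constructor
      · intro i hi
        simp only [Finset.mem_filter, Finset.mem_univ, true_and] at hi ⊢
        intro hxi
        exact hi (by simp [Pi.add_apply, hxi, hsupp i hxi])
      · intro hcon
        have hxj : x j ≠ 0 := fun h => hj (hsupp j h)
        have hjmem : j ∈ Finset.univ.filter (fun i => x i ≠ 0) := by
          simp [hxj]
        have := hcon hjmem
        simp only [Finset.mem_filter, Finset.mem_univ, true_and] at this
        -- x j ≠ 0 and w j ≠ 0 in ZMod 2 means both are 1, sum is 0
        have h2 : ∀ a : ZMod 2, a ≠ 0 → a = 1 := by decide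
        apply this
        simp [Pi.add_apply, h2 _ hxj, h2 _ hj]
        decide
    have hlt : hammingNorm (x + w) < hammingNorm x := by
      simpa [hammingNorm] using Finset.card_lt_card hsub
    omega
  -- hence the restriction to the zero set of x is injective on ker T
  let π : LinearMap.ker T →ₗ[ZMod 2] ({i : Fin n // x i = 0} → ZMod 2) :=
    (LinearMap.funLeft (ZMod 2) (ZMod 2) (fun i : {i : Fin n // x i = 0} => i.val)).comp
      (LinearMap.ker T).subtype
  have hπ : Function.Injective π := by
    intro a b hab
    ext i
    have h := hker (a.1 - b.1) (by
      exact (LinearMap.ker T).sub_mem a.2 b.2)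
      (fun i hi => by
        have := congrFun hab ⟨i, hi⟩
        simpa [π, LinearMap.funLeft, sub_eq_zero] using this)
    have := congrFun h i
    simpa [sub_eq_zero] using this
  have hdim1 : Module.finrank (ZMod 2) (LinearMap.ker T) ≤
      (Finset.univ.filter fun i : Fin n => x i = 0).card := by
    calc Module.finrank (ZMod 2) (LinearMap.ker T)
        ≤ Module.finrank (ZMod 2) ({i : Fin n // x i = 0} → ZMod 2) :=
          LinearMap.finrank_le_finrank_of_injective hπ
      _ = Fintype.card {i : Fin n // x i = 0} := Module.finrank_pi _
      _ = (Finset.univ.filter fun i : Fin n => x i = 0).card := Fintype.card_subtype _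
  have hcard : (Finset.univ.filter fun i : Fin n => x i = 0).card + hammingNorm x = n := by
    have := Finset.card_filter_add_card_filter_not
      (s := (Finset.univ : Finset (Fin n))) (p := fun i => x i = 0)
    simpa [hammingNorm] using this
  have hrn := LinearMap.finrank_range_add_finrank_ker T
  have hrange : Module.finrank (ZMod 2) (LinearMap.range T) ≤ k := by
    calc Module.finrank (ZMod 2) (LinearMap.range T)
        ≤ Module.finrank (ZMod 2) (Fin k → ZMod 2) := Submodule.finrank_le _
      _ = k := by simp
  have hnormle : hammingNorm x ≤ n := by
    simpa [hammingNorm] using Finset.card_filter_le Finset.univ (fun i => x i ≠ 0)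
  simp only [Module.finrank_pi, Fintype.card_fin] at hrn
  omega
end

section
/- The partial function f_k (equal to 0 on inputs of Hamming weight ≤ k, equal to 1 on the all-ones input, undefined elsewhere, with k+1 ≤ n) is computed by a non-adaptive parity decision tree of depth k+1: there exist vectors s₁,…,s_{k+1} ∈ F₂ⁿ and a function l : (ZMod 2)^{k+1} → ZMod 2 such that for all x with |x| ≤ k, l(⟨s₁,x⟩,…,⟨s_{k+1},x⟩) = 0, and for x the all-ones vector, l(⟨s₁,x⟩,…,⟨s_{k+1},x⟩) = 1. -/
theorem stmt_7 (n k : ℕ) (hk : k + 1 ≤ n) :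
    ∃ (s : Fin (k + 1) → (Fin n → ZMod 2)) (l : (Fin (k + 1) → ZMod 2) → ZMod 2),
      (∀ x : Fin n → ZMod 2, hammingNorm x ≤ k →
        l (fun i => ∑ j, s i j * x j) = 0) ∧
      l (fun i => ∑ j, s i j * (1 : ZMod 2)) = 1 := by
  refine ⟨fun i j => if (j : ℕ) = (i : ℕ) then 1 else 0,
    fun v => if ∀ i, v i = 1 then 1 else 0, ?_, ?_⟩
  · intro x hx
    have key : ∀ i : Fin (k + 1),
        (∑ j : Fin n, (if (j : ℕ) = (i : ℕ) then (1 : ZMod 2) else 0) * x j)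
          = x ⟨i, lt_of_lt_of_le i.isLt hk⟩ := by
      intro i
      rw [Finset.sum_eq_single (⟨i, lt_of_lt_of_le i.isLt hk⟩ : Fin n)]
      · simp
      · intro b _ hb
        have : (b : ℕ) ≠ (i : ℕ) := fun h => hb (Fin.ext h)
        simp [this]
      · simp
    simp only [key]
    rw [if_neg]
    intro hall
    -- all first k+1 coordinates of x are 1, contradicting hammingNorm ≤ k
    have : (Finset.univ.image fun i : Fin (k+1) => (⟨i, lt_of_lt_of_le i.isLt hk⟩ : Fin n))
        ⊆ Finset.univ.filter fun j => x j ≠ 0 := by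
      intro j hj
      simp only [Finset.mem_image, Finset.mem_univ, true_and] at hj
      obtain ⟨i, rfl⟩ := hj
      simp only [Finset.mem_filter, Finset.mem_univ, true_and]
      rw [hall i]
      exact one_ne_zero
    have hcard := Finset.card_le_card this
    have hinj : Function.Injective
        (fun i : Fin (k+1) => (⟨i, lt_of_lt_of_le i.isLt hk⟩ : Fin n)) :=
      fun a b h => by simpa [Fin.ext_iff] using h
    rw [Finset.card_image_of_injective _ hinj] at hcard
    simp only [Finset.card_univ, Fintype.card_fin] at hcard
    have : hammingNorm x = (Finset.univ.filter fun j => x j ≠ 0).card := rfl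
    omega
  · simp only []
    rw [if_pos]
    intro i
    rw [Finset.sum_eq_single (⟨i, lt_of_lt_of_le i.isLt hk⟩ : Fin n)] <;> simp
    intro b hb
    have : (b : ℕ) ≠ (i : ℕ) := fun h => hb (Fin.ext h)
    simp [this]
end

section
/- Suppose there exists a covering code C ⊆ F₂ⁿ with |C| ≤ 2^t and covering radius R = ⌊(n−k−1)/2⌋ (every point of F₂ⁿ is within Hamming distance R of some codeword). Then there exist functions h : F₂ⁿ → Fin 2^t and φ : Fin 2^t × F₂ⁿ → Bool such that for all x, y ∈ F₂ⁿ: if the Hamming weight of x⊕y is at most k then φ(h(x), y) = false, and if x⊕y is the all-ones vector then φ(h(x), y) = true. -/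
/-!
Encode `x` by (the index of) a codeword `c` within distance `R` of `x`. Given `y`, the decoder
answers "far" exactly when `c` is within distance `R` of the complement `y + 𝟙`. If `x + y = 𝟙`
then `y + 𝟙 = x`, so this happens. If instead `|x + y| ≤ k`, the complement `y + 𝟙` lies at distance
`n - |x + y| ≥ n - k > 2R` from `x`, so by the triangle inequality it cannot be within `R` of `c`.
-/

lemma Finset.exists_decode_comp_encode {α : Type*} [Nonempty α] (s : Finset α) {m : ℕ}
    (hs : s.card ≤ m) :
    ∃ (encode : s → Fin m) (decode : Fin m → α), ∀ a, decode (encode a) = a := by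
  obtain ⟨encode⟩ := Function.Embedding.nonempty_of_card_le (α := s) (β := Fin m)
    (by simpa using hs)
  exact ⟨encode, Function.extend encode Subtype.val fun _ => Classical.arbitrary α,
    encode.injective.extend_apply _ _⟩

lemma hammingNorm_add_one_add_hammingNorm {ι : Type*} [Fintype ι] (v : ι → ZMod 2) :
    hammingNorm (v + 1) + hammingNorm v = Fintype.card ι := by
  classical
  have flip : ∀ a : ZMod 2, a + 1 ≠ 0 ↔ ¬a ≠ 0 := by decide
  simp only [hammingNorm, Pi.add_apply, Pi.one_apply, flip]
  rw [add_comm]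
  exact Finset.card_filter_add_card_filter_not (s := Finset.univ) (fun i => v i ≠ 0)

lemma lt_hammingNorm_add_of_hammingDist_le {n k r : ℕ} {x y c : Fin n → ZMod 2}
    (hr : 2 * r < n - k) (hxc : hammingDist x c ≤ r) (hcy : hammingDist c (y + 1) ≤ r) :
    k < hammingNorm (x + y) := by
  have hsub : -x + (y + 1) = x + y + 1 := by
    funext i
    have : ∀ a b : ZMod 2, -a + (b + 1) = a + b + 1 := by decide
    exact this (x i) (y i)
  have hfar : hammingDist x (y + 1) ≤ 2 * r := by
    linarith [hammingDist_triangle x c (y + 1)]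
  have hcompl := hammingNorm_add_one_add_hammingNorm (x + y)
  rw [hammingDist_eq_hammingNorm, hsub] at hfar
  rw [Fintype.card_fin] at hcompl
  omega

theorem stmt_8 (n k t : ℕ) (hk : k < n)
    (C : Finset (Fin n → ZMod 2)) (hC : C.card ≤ 2 ^ t)
    (hcov : ∀ x : Fin n → ZMod 2, ∃ c ∈ C, hammingDist x c ≤ (n - k - 1) / 2) :
    ∃ (h : (Fin n → ZMod 2) → Fin (2 ^ t))
      (φ : Fin (2 ^ t) → (Fin n → ZMod 2) → Bool),
      ∀ x y : Fin n → ZMod 2,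
        (hammingNorm (x + y) ≤ k → φ (h x) y = false) ∧
        (x + y = (fun _ => 1) → φ (h x) y = true) := by
  choose near near_mem near_dist using hcov
  obtain ⟨encode, decode, decode_encode⟩ := C.exists_decode_comp_encode hC
  refine ⟨fun x => encode ⟨near x, near_mem x⟩,
    fun i y => decide (hammingDist (decode i) (y + 1) ≤ (n - k - 1) / 2),
    fun x y => ⟨fun hxy => ?_, fun hxy => ?_⟩⟩
  · simp only [decode_encode, decide_eq_false_iff_not]
    intro hfar
    exact (lt_hammingNorm_add_of_hammingDist_le (by omega) (near_dist x) hfar).not_ge hxy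
  · have hcompl : y + 1 = x := by
      funext i
      have : ∀ a b : ZMod 2, a + b = 1 → b + 1 = a := by decide
      exact this (x i) (y i) (congrFun hxy i)
    simpa only [decode_encode, hcompl, decide_eq_true_eq, hammingDist_comm] using near_dist x
end

section
/- For every n ≥ 1 and every R ≤ n there exists a set C ⊆ F₂ⁿ with log₂|C| ≤ n − log₂ V(n,R) + log₂ n such that every point of F₂ⁿ is within Hamming distance R of some element of C, where V(n,R) = Σ_{i=0}^{R} C(n,i). -/
/-!
Greedy covering. If every point is covered by at least `V` of the `N` candidate centres, double
counting gives a centre covering a `V / N` fraction of any set of still uncovered points, so after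
`k` greedy steps at most `|α| (1 - V/N)^k ≤ |α| e^{-kV/N}` points remain uncovered, and
`⌊N ln |α| / V⌋ + 1` steps suffice. On `F₂ⁿ` this is `ln 2 · n 2ⁿ / V(n,R) + 1 ≤ n 2ⁿ / V(n,R)` once
`n ≥ 4`. For `n ≤ 3` the `2^(n-R)` words vanishing on `R` fixed coordinates already do, since then
`2^(n-R) V(n,R) ≤ n 2ⁿ` by inspection.
-/

open Finset

section GreedyCover

variable {α β : Type*} [Fintype β] (r : α → β → Prop) [∀ a b, Decidable (r a b)]

lemma exists_mul_div_le_card_filter [Nonempty β] {V : ℕ} (U : Finset α)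
    (hV : ∀ x ∈ U, V ≤ #{c | r x c}) :
    ∃ c, (#U : ℝ) * (V / Fintype.card β) ≤ #{x ∈ U | r x c} := by
  have hsum :
      ∑ _c : β, (#U : ℝ) * (V / Fintype.card β) ≤ ∑ c : β, (#{x ∈ U | r x c} : ℝ) := by
    calc ∑ _c : β, (#U : ℝ) * (V / Fintype.card β) = #U * V := by
          rw [sum_const, card_univ, nsmul_eq_mul]; field_simp
      _ ≤ ∑ x ∈ U, (#{c | r x c} : ℝ) := by
          rw [← nsmul_eq_mul]; exact card_nsmul_le_sum _ _ _ fun x hx => by exact_mod_cast hV x hx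
      _ = ∑ c : β, (#{x ∈ U | r x c} : ℝ) := by
          exact_mod_cast sum_card_bipartiteAbove_eq_sum_card_bipartiteBelow r
  obtain ⟨c, -, hc⟩ := exists_le_of_sum_le univ_nonempty hsum
  exact ⟨c, hc⟩

lemma exists_cover_card_le_of_mul_pow_lt_one [Nonempty β] {V : ℕ}
    (hV : ∀ x, V ≤ #{c | r x c}) (k : ℕ) (U : Finset α)
    (hU : (#U : ℝ) * (1 - V / Fintype.card β) ^ k < 1) :
    ∃ C : Finset β, #C ≤ k ∧ ∀ x ∈ U, ∃ c ∈ C, r x c := by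
  classical
  induction k generalizing U with
  | zero =>
    have : U = ∅ := card_eq_zero.mp <| Nat.lt_one_iff.mp <| by exact_mod_cast (by simpa using hU)
    exact ⟨∅, by simp, by simp [this]⟩
  | succ k ih =>
    obtain rfl | ⟨x₀, hx₀⟩ := U.eq_empty_or_nonempty
    · exact ⟨∅, by simp, by simp⟩
    have hq : 0 ≤ 1 - (V : ℝ) / Fintype.card β := by
      rw [sub_nonneg, div_le_one (by positivity)]
      exact_mod_cast (hV x₀).trans (card_le_univ _)
    obtain ⟨c, hc⟩ := exists_mul_div_le_card_filter r U fun x _ => hV x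
    set U' := {x ∈ U | ¬ r x c}
    have hU' : (#U' : ℝ) ≤ #U * (1 - V / Fintype.card β) := by
      have := card_filter_add_card_filter_not (s := U) (r · c)
      have : (#U' : ℝ) = #U - #{x ∈ U | r x c} := by
        rw [eq_sub_iff_add_eq, add_comm]; exact_mod_cast this
      linarith
    obtain ⟨C, hCk, hC⟩ := ih U' <| by
      calc (#U' : ℝ) * (1 - V / Fintype.card β) ^ k
          ≤ #U * (1 - V / Fintype.card β) * (1 - V / Fintype.card β) ^ k := by gcongr
        _ < 1 := by rwa [mul_assoc, ← pow_succ']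
    refine ⟨insert c C, (card_insert_le c C).trans (by omega), fun x hx => ?_⟩
    by_cases hxc : r x c
    · exact ⟨c, mem_insert_self c C, hxc⟩
    · obtain ⟨c', hc', hxc'⟩ := hC x (mem_filter.mpr ⟨hx, hxc⟩)
      exact ⟨c', mem_insert_of_mem hc', hxc'⟩

lemma exists_cover_card_le_mul_log_div [Fintype α] [Nonempty α] [Nonempty β] {V : ℕ}
    (hV₀ : 0 < V) (hV : ∀ x, V ≤ #{c | r x c}) :
    ∃ C : Finset β, (#C : ℝ) ≤ Fintype.card β * Real.log (Fintype.card α) / V + 1 ∧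
      ∀ x, ∃ c ∈ C, r x c := by
  set N : ℝ := (Fintype.card β : ℝ) with hN_def
  set a : ℝ := N * Real.log (Fintype.card α) / V
  have hα : (0 : ℝ) < Fintype.card α := by exact_mod_cast Fintype.card_pos
  have hN : 0 < N := by rw [hN_def]; exact_mod_cast Fintype.card_pos
  have hq : 0 ≤ 1 - (V : ℝ) / N := by
    obtain ⟨x⟩ := ‹Nonempty α›
    rw [sub_nonneg, div_le_one hN, hN_def]
    exact_mod_cast (hV x).trans (card_le_univ _)
  have hlog : Real.log (Fintype.card α) < (⌊a⌋₊ + 1 : ℕ) * (V / N) := by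
    calc Real.log (Fintype.card α) = a * (V / N) := by
          simp only [a]; field_simp
      _ < (⌊a⌋₊ + 1 : ℕ) * (V / N) := by
          gcongr; exact_mod_cast Nat.lt_floor_add_one a
  obtain ⟨C, hCk, hC⟩ := exists_cover_card_le_of_mul_pow_lt_one r hV (⌊a⌋₊ + 1) univ <| by
    calc (#(univ : Finset α) : ℝ) * (1 - V / N) ^ (⌊a⌋₊ + 1)
        ≤ Fintype.card α * Real.exp (-(V / N)) ^ (⌊a⌋₊ + 1) := by
          rw [card_univ]; gcongr; linarith [Real.add_one_le_exp (-(V / N))]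
      _ = Fintype.card α * Real.exp (-((⌊a⌋₊ + 1 : ℕ) * (V / N))) := by
          rw [← Real.exp_nat_mul, mul_neg]
      _ < Fintype.card α * Real.exp (-Real.log (Fintype.card α)) := by gcongr
      _ = 1 := by rw [Real.exp_neg, Real.exp_log hα, mul_inv_cancel₀ hα.ne']
  refine ⟨C, ?_, fun x => hC x (mem_univ x)⟩
  calc (#C : ℝ) ≤ (⌊a⌋₊ + 1 : ℕ) := by exact_mod_cast hCk
    _ ≤ a + 1 := by push_cast; gcongr; exact Nat.floor_le (by positivity)

end GreedyCover

section Hamming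

variable {ι : Type*} [Fintype ι]

lemma card_filter_card_le (R : ℕ) :
    #{s : Finset ι | #s ≤ R} = ∑ i ∈ range (R + 1), (Fintype.card ι).choose i := by
  rw [card_eq_sum_card_fiberwise (f := card) (t := range (R + 1)) fun s hs => by
    simpa [Nat.lt_succ_iff] using hs]
  refine sum_congr rfl fun i hi => ?_
  rw [← card_univ, ← card_powersetCard]
  congr 1
  ext s
  simp only [mem_filter, mem_univ, true_and, mem_powersetCard, subset_univ]
  simp only [mem_range] at hi
  omega

lemma sum_choose_le_card_hammingDist_le [DecidableEq ι] (x : ι → ZMod 2) (R : ℕ) :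
    ∑ i ∈ range (R + 1), (Fintype.card ι).choose i ≤ #{c | hammingDist x c ≤ R} := by
  let flip (s : Finset ι) : ι → ZMod 2 := fun i => if i ∈ s then x i + 1 else x i
  have hflip (s : Finset ι) : ({i | x i ≠ flip s i} : Finset ι) = s := by
    ext i
    by_cases hi : i ∈ s <;> simp [flip, hi]
  rw [← card_filter_card_le]
  refine card_le_card_of_injOn flip (fun s hs => ?_) fun s _ t _ hst => ?_
  · simp only [coe_filter, mem_univ, true_and, Set.mem_ofPred_eq] at hs ⊢
    rwa [hammingDist, hflip]
  · rw [← hflip s, ← hflip t, hst]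

lemma exists_card_eq_pow_hammingDist_le [DecidableEq ι] {β : Type*} [Fintype β] [DecidableEq β]
    [Zero β] (s : Finset ι) :
    ∃ C : Finset (ι → β), #C = Fintype.card β ^ (Fintype.card ι - #s) ∧
      ∀ x, ∃ c ∈ C, hammingDist x c ≤ #s := by
  refine ⟨Fintype.piFinset fun i => if i ∈ s then {0} else univ, ?_, fun x => ?_⟩
  · rw [Fintype.card_piFinset, ← card_compl]
    simp [apply_ite, prod_ite, filter_not, compl_eq_univ_sdiff]
  · refine ⟨fun i => if i ∈ s then 0 else x i, ?_, card_le_card fun i => ?_⟩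
    · simp only [Fintype.mem_piFinset]
      intro i
      by_cases hi : i ∈ s <;> simp [hi]
    · by_cases hi : i ∈ s <;> simp [hi]

end Hamming

lemma sum_range_choose_pos (n R : ℕ) : 0 < ∑ i ∈ range (R + 1), n.choose i :=
  sum_pos' (fun _ _ => Nat.zero_le _) ⟨0, by simp⟩

lemma exists_covering_card_le_of_four_le {n : ℕ} (hn : 4 ≤ n) (R : ℕ) :
    ∃ C : Finset (Fin n → ZMod 2),
      (#C : ℝ) ≤ n * 2 ^ n / (∑ i ∈ range (R + 1), n.choose i : ℕ) ∧
        ∀ x, ∃ c ∈ C, hammingDist x c ≤ R := by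
  set V := ∑ i ∈ range (R + 1), n.choose i
  have hV (x : Fin n → ZMod 2) : V ≤ #{c | hammingDist x c ≤ R} := by
    simpa using sum_choose_le_card_hammingDist_le x R
  have hV₀ : 0 < V := sum_range_choose_pos n R
  have hcard : Fintype.card (Fin n → ZMod 2) = 2 ^ n := by simp
  obtain ⟨C, hC, hcover⟩ :=
    exists_cover_card_le_mul_log_div (fun x c => hammingDist x c ≤ R) hV₀ hV
  refine ⟨C, hC.trans ?_, hcover⟩
  have hVle : (V : ℝ) ≤ 2 ^ n := by exact_mod_cast hcard ▸ (hV 0).trans (card_le_univ _)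
  have hb : 4 ≤ (n : ℝ) * 2 ^ n / V := by
    rw [le_div_iff₀ (by positivity)]
    have : (4 : ℝ) ≤ n := by exact_mod_cast hn
    nlinarith
  have hlog2 := Real.log_two_lt_d9
  rw [hcard]
  calc ((2 ^ n : ℕ) : ℝ) * Real.log (2 ^ n : ℕ) / V + 1 = Real.log 2 * (n * 2 ^ n / V) + 1 := by
        push_cast; rw [Real.log_pow]; ring
    _ ≤ n * 2 ^ n / V := by nlinarith

lemma exists_covering_card_le_of_lt_four {n R : ℕ} (hn : 1 ≤ n) (h4 : n < 4) (hR : R ≤ n) :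
    ∃ C : Finset (Fin n → ZMod 2),
      (#C : ℝ) ≤ n * 2 ^ n / (∑ i ∈ range (R + 1), n.choose i : ℕ) ∧
        ∀ x, ∃ c ∈ C, hammingDist x c ≤ R := by
  obtain ⟨s, -, hs⟩ := exists_subset_card_eq (s := (univ : Finset (Fin n))) (by simpa using hR)
  obtain ⟨C, hC, hcover⟩ := exists_card_eq_pow_hammingDist_le (β := ZMod 2) s
  refine ⟨C, ?_, hs ▸ hcover⟩
  have hsmall : 2 ^ (n - R) * ∑ i ∈ range (R + 1), n.choose i ≤ n * 2 ^ n := by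
    interval_cases n <;> interval_cases R <;> decide
  rw [le_div_iff₀ (by exact_mod_cast sum_range_choose_pos n R), hC, hs, ZMod.card, Fintype.card_fin]
  exact_mod_cast hsmall

theorem stmt_9 (n R : ℕ) (hn : 1 ≤ n) (hR : R ≤ n) :
    ∃ C : Finset (Fin n → ZMod 2),
      Real.logb 2 C.card ≤
        (n : ℝ) - Real.logb 2 (∑ i ∈ Finset.range (R + 1), (n.choose i : ℝ)) + Real.logb 2 n ∧
      ∀ x : Fin n → ZMod 2, ∃ c ∈ C, hammingDist x c ≤ R := by
  obtain ⟨C, hC, hcover⟩ := (le_or_gt 4 n).elim (exists_covering_card_le_of_four_le · R)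
    (exists_covering_card_le_of_lt_four hn · hR)
  refine ⟨C, ?_, hcover⟩
  obtain ⟨c, hc, -⟩ := hcover 0
  have hV₀ : 0 < ∑ i ∈ range (R + 1), (n.choose i : ℝ) := by
    exact_mod_cast sum_range_choose_pos n R
  push_cast at hC
  calc Real.logb 2 #C ≤ Real.logb 2 (n * 2 ^ n / ∑ i ∈ range (R + 1), (n.choose i : ℝ)) :=
        Real.logb_le_logb_of_le one_lt_two (by exact_mod_cast card_pos.mpr ⟨c, hc⟩) hC
    _ = _ := by
        rw [Real.logb_div (by positivity) hV₀.ne',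
          Real.logb_mul (by exact_mod_cast (by omega : n ≠ 0)) (by positivity),
          Real.logb_pow, Real.logb_self_eq_one one_lt_two]
        ring
end

section
/- Let A and B be nonempty subsets of F₂ⁿ. If B is not contained in any coset of a proper subspace of F₂ⁿ, and A ≠ F₂ⁿ, then |A + B| > |A|, where A + B = {a + b : a ∈ A, b ∈ B}. -/
open Pointwise

theorem stmt_10 (n : ℕ) (A B : Set (Fin n → ZMod 2))
    (hA : A.Nonempty) (hB : B.Nonempty)
    (hBcoset : ¬ ∃ (Q : Submodule (ZMod 2) (Fin n → ZMod 2)) (q : Fin n → ZMod 2),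
      Q ≠ ⊤ ∧ B ⊆ (fun v => v + q) '' (Q : Set (Fin n → ZMod 2)))
    (hAne : A ≠ Set.univ) :
    Nat.card A < Nat.card (A + B : Set (Fin n → ZMod 2)) := by
  by_contra hle
  push_neg at hle
  have hc2 : ∀ c : ZMod 2, c + c = 0 := by decide
  have hchar : ∀ x : Fin n → ZMod 2, x + x = 0 := by
    intro x; funext i; exact hc2 (x i)
  have comp : ∀ u v : Fin n → ZMod 2,
      (fun a => a + v) '' ((fun a => a + u) '' A) = (fun a => a + (u + v)) '' A := by
    intro u v; rw [← Set.image_comp]; apply congrArg (· '' A); funext a; simp [add_assoc]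
  obtain ⟨b₀, hb₀⟩ := hB
  have key : ∀ b ∈ B, (fun a => a + b) '' A = A + B := by
    intro b hb
    apply Set.eq_of_subset_of_ncard_le
    · rintro x ⟨a, ha, rfl⟩; exact Set.add_mem_add ha hb
    · calc (A + B).ncard ≤ A.ncard := by
            rw [← Nat.card_coe_set_eq, ← Nat.card_coe_set_eq]; exact hle
        _ = ((fun a => a + b) '' A).ncard :=
            (Set.ncard_image_of_injective _ (add_left_injective b)).symm
    · exact Set.toFinite _
  set Q : Submodule (ZMod 2) (Fin n → ZMod 2) :=
    { carrier := {v | (fun a => a + v) '' A = A}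
      zero_mem' := by simp
      add_mem' := by
        intro x y hx hy
        simp only [Set.mem_setOf_eq] at *
        rw [← comp, hx, hy]
      smul_mem' := by
        intro c v hv
        have hc : c = 0 ∨ c = 1 := by revert c; decide
        rcases hc with rfl | rfl
        · simp
        · simpa using hv } with hQdef
  have memQ : ∀ v, v ∈ Q ↔ (fun a => a + v) '' A = A := by
    intro v; rfl
  have hQ : Q ≠ ⊤ := by
    intro h
    apply hAne
    obtain ⟨a, ha⟩ := hA
    ext x
    simp only [Set.mem_univ, iff_true]
    have hv : (x + a) ∈ Q := h ▸ Submodule.mem_top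
    rw [memQ] at hv
    have hx : a + (x + a) ∈ A := hv ▸ ⟨a, ha, rfl⟩
    have : a + (x + a) = x := by
      rw [add_comm x a, ← add_assoc, hchar, zero_add]
    rwa [this] at hx
  apply hBcoset
  refine ⟨Q, b₀, hQ, ?_⟩
  intro b hb
  refine ⟨b + b₀, ?_, ?_⟩
  · rw [SetLike.mem_coe, memQ]
    rw [← comp, key b hb, ← key b₀ hb₀, comp, hchar]
    simp
  · show b + b₀ + b₀ = b
    rw [add_assoc, hchar, add_zero]
end

section
/- Let A, B be nonempty subsets of F₂ⁿ with A not contained in any coset of a proper subspace of F₂ⁿ. Then |A + B| ≥ min(|A| + |B| − 2^(n−3), 3·2^(n−2)). -/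
/-!
Repeated Dyson e-transforms `(s, t) ↦ (s ∪ (e + t), t ∩ (s - e))` preserve `|s| + |t|`, shrink
the sumset and only enlarge `s`; with `e = a - c` they strictly shrink `t` as long as some
`a + b - c` (`a ∈ s`, `b, c ∈ t`) lies outside `s`. So they end at a pair with
`s + (t - t) ⊆ s`: then `s` is a union of cosets of the subspace `K` generated by `t - t`, and
`t` lies in a single coset of `K`. If `|K| ≤ 2^(n-3)`, then
`|s| + |t| - 2^(n-3) ≤ |s| ≤ |s + t|`. Otherwise `|K| ≥ 2^(n-2)`; the image of `s ⊇ A` in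
`F₂ⁿ/K` still affinely spans, so it has at least `min(3, |F₂ⁿ/K|)` points and
`|s + t| ≥ |s| ≥ min(3|K|, 2^n) ≥ 3·2^(n-2)`.
-/

open Pointwise Finset

namespace Finset

variable {α : Type*} [AddCommGroup α] [DecidableEq α]

theorem exists_superset_add_sub_subset_self (s t : Finset α) (ht : t.Nonempty) :
    ∃ s' t' : Finset α, s ⊆ s' ∧ t'.Nonempty ∧ #s' + #t' = #s + #t ∧ s' + t' ⊆ s + t ∧
      s' + (t' - t') ⊆ s' := by
  induction t using Finset.strongInduction generalizing s with
  | H t ih =>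
  by_cases hstable : s + (t - t) ⊆ s
  · exact ⟨s, t, subset_rfl, ht, rfl, subset_rfl, hstable⟩
  obtain ⟨_, hx, hxs⟩ := not_subset.1 hstable
  obtain ⟨a, ha, _, hd, rfl⟩ := mem_add.1 hx
  obtain ⟨b, hb, c, hc, rfl⟩ := mem_sub.1 hd
  set u := addDysonETransform (a - c) (s, t)
  have hcu : c ∈ u.2 := mem_inter.2 ⟨hc, mem_neg_vadd_finset_iff.2 (by simpa using ha)⟩
  have hbu : b ∉ u.2 := fun h => hxs <| by
    simpa [sub_add_eq_add_sub, add_sub_assoc] using mem_neg_vadd_finset_iff.1 (mem_inter.1 h).2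
  obtain ⟨s', t', hs', ht', hcard, hsub, hstable'⟩ :=
    ih u.2 (ssubset_iff_subset_ne.2 ⟨inter_subset_left, fun h => hbu (h ▸ hb)⟩) u.1 ⟨c, hcu⟩
  exact ⟨s', t', subset_union_left.trans hs', ht',
    hcard.trans (addDysonETransform.card _ _), hsub.trans (addDysonETransform.subset _ _),
    hstable'⟩

theorem add_mem_of_add_sub_subset {s t : Finset α} (h : s + (t - t) ⊆ s) {a k : α} (ha : a ∈ s)
    (hk : k ∈ AddSubgroup.closure ((t - t : Finset α) : Set α)) : a + k ∈ s := by
  induction hk using AddSubgroup.closure_induction'' generalizing a with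
  | mem k hk => exact h (add_mem_add ha hk)
  | neg_mem k hk =>
    obtain ⟨b, hb, c, hc, rfl⟩ := mem_sub.1 hk
    simpa using h (add_mem_add ha (sub_mem_sub hc hb))
  | zero => simpa using ha
  | add k l _ _ hk hl => simpa [add_assoc] using hl (hk ha)

theorem card_le_natCard_of_sub_subset [Finite α] {t : Finset α} {H : AddSubgroup α}
    (h : ((t - t : Finset α) : Set α) ⊆ H) : #t ≤ Nat.card H := by
  obtain rfl | ⟨b, hb⟩ := t.eq_empty_or_nonempty
  · exact card_empty.trans_le (Nat.zero_le _)
  rw [← Nat.card_eq_finsetCard]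
  exact Nat.card_le_card_of_injective (fun x => ⟨x - b, h (sub_mem_sub x.2 hb)⟩)
    fun x y hxy => Subtype.ext (sub_left_injective (congrArg Subtype.val hxy))

end Finset

theorem subset_image_add_vectorSpan {k V : Type*} [Ring k] [AddCommGroup V] [Module k V]
    {A : Set V} {a : V} (ha : a ∈ A) : A ⊆ (· + a) '' (vectorSpan k A : Set V) :=
  fun x hx => ⟨x - a, vsub_mem_vectorSpan k hx ha, sub_add_cancel x a⟩

theorem min_three_le_natCard_of_vectorSpan_eq_top {W : Type*} [AddCommGroup W] [Module (ZMod 2) W]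
    [Finite W] {S : Set W} (hS : S.Nonempty) (hspan : vectorSpan (ZMod 2) S = ⊤) :
    min 3 (Nat.card W) ≤ Nat.card S := by
  have : Fintype S := Fintype.ofFinite S
  have : Nonempty S := hS.to_subtype
  have hrank := finrank_vectorSpan_range_add_one_le (ZMod 2) (Subtype.val : S → W)
  rw [Subtype.range_coe, hspan, finrank_top, ← Nat.card_eq_fintype_card] at hrank
  rw [Module.natCard_eq_pow_finrank (K := ZMod 2), Nat.card_zmod]
  have hmin : ∀ d : ℕ, min 3 (2 ^ d) ≤ d + 1
    | 0 | 1 => by norm_num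
    | d + 2 => min_le_left _ _ |>.trans (by omega)
  exact (hmin _).trans hrank

theorem two_pow_succ_le_natCard_of_lt {V : Type*} [AddCommGroup V] [Module (ZMod 2) V] [Finite V]
    {m : ℕ} (h : 2 ^ m < Nat.card V) : 2 ^ (m + 1) ≤ Nat.card V := by
  rw [Module.natCard_eq_pow_finrank (K := ZMod 2), Nat.card_zmod] at h ⊢
  exact Nat.pow_le_pow_right two_pos ((Nat.pow_lt_pow_iff_right (by norm_num)).1 h)

theorem Submodule.natCard_preimage_mkQ {R V : Type*} [Ring R] [AddCommGroup V] [Module R V]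
    (K : Submodule R V) (S : Set (V ⧸ K)) : Nat.card (K.mkQ ⁻¹' S) = Nat.card K * Nat.card S := by
  rw [← Nat.card_prod]
  exact Nat.card_congr (QuotientAddGroup.preimageMkEquivAddSubgroupProdSet K.toAddSubgroup S)

theorem min_three_mul_natCard_le_natCard_of_add_mem {V : Type*} [AddCommGroup V]
    [Module (ZMod 2) V] [Finite V] (K : Submodule (ZMod 2) V) {A : Set V} (hA : A.Nonempty)
    (hspan : vectorSpan (ZMod 2) A = ⊤) (hper : ∀ a ∈ A, ∀ k ∈ K, a + k ∈ A) :
    min (3 * Nat.card K) (Nat.card V) ≤ Nat.card A := by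
  have hpre : K.mkQ ⁻¹' (K.mkQ '' A) = A := by
    refine subset_antisymm ?_ (Set.subset_preimage_image _ _)
    rintro x ⟨a, ha, hax⟩
    simpa using hper a ha (x - a) ((Submodule.Quotient.eq K).1 hax.symm)
  have hS : vectorSpan (ZMod 2) (K.mkQ '' A) = ⊤ := by
    rw [← K.mkQ.coe_toAffineMap, ← AffineMap.map_vectorSpan, hspan, Submodule.map_top,
      LinearMap.toAffineMap_linear, Submodule.range_mkQ]
  have : Finite (V ⧸ K) := Finite.of_surjective _ K.mkQ_surjective
  rw [K.card_eq_card_quotient_mul_card, ← hpre, K.natCard_preimage_mkQ, mul_comm 3,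
    Nat.mul_min_mul_left]
  exact Nat.mul_le_mul_left _ (min_three_le_natCard_of_vectorSpan_eq_top (hA.image _) hS)

theorem stmt_11 (n : ℕ) (hn : 3 ≤ n) (A B : Set (Fin n → ZMod 2))
    (hA : A.Nonempty) (hB : B.Nonempty)
    (hAcoset : ¬ ∃ (Q : Submodule (ZMod 2) (Fin n → ZMod 2)) (q : Fin n → ZMod 2),
      Q ≠ ⊤ ∧ A ⊆ (fun v => v + q) '' (Q : Set (Fin n → ZMod 2))) :
    min (Nat.card A + Nat.card B - 2 ^ (n - 3)) (3 * 2 ^ (n - 2)) ≤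
      Nat.card (A + B : Set (Fin n → ZMod 2)) := by
  classical
  obtain ⟨s, rfl⟩ := A.toFinite.exists_finset_coe
  obtain ⟨t, rfl⟩ := B.toFinite.exists_finset_coe
  obtain ⟨a, ha⟩ := hA
  have hspan : vectorSpan (ZMod 2) (s : Set (Fin n → ZMod 2)) = ⊤ :=
    by_contra fun h => hAcoset ⟨_, a, h, subset_image_add_vectorSpan ha⟩
  obtain ⟨s', t', hss', ht', hcard, hsub, hstable⟩ :=
    s.exists_superset_add_sub_subset_self t (coe_nonempty.1 hB)
  let K := AddSubgroup.toZModSubmodule 2 (AddSubgroup.closure (↑(t' - t') : Set (Fin n → ZMod 2)))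
  have ht'K : #t' ≤ Nat.card K := card_le_natCard_of_sub_subset AddSubgroup.subset_closure
  have hs' : #s' ≤ #(s + t) := (card_le_card_add_right ht').trans (card_le_card hsub)
  rw [← coe_add]
  simp only [Nat.card_coe_set_eq, Set.ncard_coe_finset]
  rcases le_or_gt (Nat.card K) (2 ^ (n - 3)) with hK | hK
  · exact (min_le_left _ _).trans (by omega)
  have hK' : 2 ^ (n - 2) ≤ Nat.card K := by
    simpa [show n - 3 + 1 = n - 2 by omega] using two_pow_succ_le_natCard_of_lt hK
  have hs'K := min_three_mul_natCard_le_natCard_of_add_mem K ⟨a, hss' ha⟩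
    (top_unique (hspan ▸ vectorSpan_mono _ (coe_subset.2 hss')))
    (fun _ ha _ hk => add_mem_of_add_sub_subset hstable ha hk)
  have hV : Nat.card (Fin n → ZMod 2) = 2 ^ (n - 2) * 2 ^ 2 := by
    rw [Nat.card_fun, Nat.card_zmod, Nat.card_fin, ← pow_add, Nat.sub_add_cancel (by omega)]
  simp only [Nat.card_coe_set_eq, Set.ncard_coe_finset, hV] at hs'K
  omega
end

section
/- Let A, B be nonempty subsets of F₂ⁿ, let Q be the smallest subspace of F₂ⁿ such that B is contained in some coset of Q. Then either |A + B| > |A|, or for every coset of Q, the intersection of A with that coset is either empty or the entire coset. -/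
open Pointwise

theorem stmt_12 (n : ℕ) (A B : Set (Fin n → ZMod 2))
    (hA : A.Nonempty) (hB : B.Nonempty)
    (hAcoset : ¬ ∃ (Q' : Submodule (ZMod 2) (Fin n → ZMod 2)) (q : Fin n → ZMod 2),
      Q' ≠ ⊤ ∧ A ⊆ (fun v => v + q) '' (Q' : Set (Fin n → ZMod 2)))
    (Q : Submodule (ZMod 2) (Fin n → ZMod 2))
    (hQ : ∃ q : Fin n → ZMod 2, B ⊆ (fun v => v + q) '' (Q : Set (Fin n → ZMod 2)))
    (hQmin : ∀ Q' : Submodule (ZMod 2) (Fin n → ZMod 2),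
      (∃ q : Fin n → ZMod 2, B ⊆ (fun v => v + q) '' (Q' : Set (Fin n → ZMod 2))) → Q ≤ Q') :
    Nat.card A < Nat.card (A + B : Set (Fin n → ZMod 2)) ∨
      ∀ q : Fin n → ZMod 2,
        A ∩ ((fun v => v + q) '' (Q : Set (Fin n → ZMod 2))) = ∅ ∨
        (fun v => v + q) '' (Q : Set (Fin n → ZMod 2)) ⊆ A := by
  classical
  by_cases hlt : Nat.card A < Nat.card (A + B : Set (Fin n → ZMod 2))
  · exact Or.inl hlt
  right
  push_neg at hlt
  obtain ⟨b₀, hb₀⟩ := hB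
  have hself : ∀ x : Fin n → ZMod 2, x + x = 0 := by
    intro x
    funext i
    have h2 : ∀ a : ZMod 2, a + a = 0 := by decide
    exact h2 (x i)
  -- each translate of A equals A + B
  have himg : ∀ b ∈ B, (fun v => v + b) '' A = A + B := by
    intro b hb
    have hsub : (fun v => v + b) '' A ⊆ A + B := by
      rintro _ ⟨a, ha, rfl⟩
      exact Set.add_mem_add ha hb
    have hinj : Function.Injective (fun v : Fin n → ZMod 2 => v + b) :=
      fun x y hxy => by simpa using hxy
    have hcard : Nat.card ((fun v => v + b) '' A) = Nat.card A :=
      Nat.card_image_of_injective hinj A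
    have h1 : (A + B : Set (Fin n → ZMod 2)).ncard ≤ ((fun v => v + b) '' A).ncard := by
      rw [← Nat.card_coe_set_eq, ← Nat.card_coe_set_eq, hcard]
      exact hlt
    exact Set.eq_of_subset_of_ncard_le hsub h1 (Set.toFinite _)
  -- stabilizer property
  have hstab : ∀ b ∈ B, ∀ a ∈ A, a + (b + b₀) ∈ A := by
    intro b hb a ha
    have h1 : a + b ∈ (fun v => v + b₀) '' A := by
      rw [himg b₀ hb₀, ← himg b hb]
      exact ⟨a, ha, rfl⟩
    obtain ⟨a', ha', haeq⟩ := h1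
    have : a + (b + b₀) = a' := by
      rw [← add_assoc, ← haeq, add_assoc, hself, add_zero]
    rw [this]
    exact ha'
  -- stabilizer submodule
  have h01 : ∀ c : ZMod 2, c = 0 ∨ c = 1 := by decide
  let S : Submodule (ZMod 2) (Fin n → ZMod 2) :=
    { carrier := {v | ∀ a ∈ A, a + v ∈ A}
      add_mem' := by
        intro v w hv hw a ha
        rw [← add_assoc]
        exact hw _ (hv a ha)
      zero_mem' := by
        intro a ha
        simpa using ha
      smul_mem' := by
        intro c v hv
        rcases h01 c with rfl | rfl
        · intro a ha; simpa using ha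
        · intro a ha; simpa using hv a ha }
  have hQS : Q ≤ S := by
    apply hQmin
    refine ⟨b₀, fun b hb => ⟨b + b₀, hstab b hb, ?_⟩⟩
    show b + b₀ + b₀ = b
    rw [add_assoc, hself, add_zero]
  -- conclusion
  intro q
  rcases Set.eq_empty_or_nonempty (A ∩ ((fun v => v + q) '' (Q : Set (Fin n → ZMod 2)))) with h | h
  · exact Or.inl h
  right
  obtain ⟨a, haA, x, hx, hxq⟩ := h
  rintro _ ⟨y, hy, rfl⟩
  have hxyS : x + y ∈ S := hQS (Q.add_mem hx hy)
  have key : a + (x + y) = y + q := by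
    rw [← hxq, add_add_add_comm, hself, zero_add, add_comm]
  show y + q ∈ A
  rw [← key]
  exact hxyS a haA
end

section
/- For any subset A of the vertex set {0,1}^m of the m-dimensional Boolean cube, the outer vertex boundary satisfies |Γ'A| ≥ |Γ'I_{|A|}|, where I_a is the set of the first a elements in Hales (simplicial) order and Γ'S = ΓS \ S is the set of vertices outside S adjacent to S. -/
/-- Hales (simplicial) order on the Boolean cube: smaller Hamming weight first;
for equal weights, `x` precedes `y` if the smallest coordinate where they differ is `1` in `x`. -/
def halesLT {m : ℕ} (x y : Fin m → ZMod 2) : Prop :=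
  hammingNorm x < hammingNorm y ∨
    (hammingNorm x = hammingNorm y ∧
      ∃ i : Fin m, x i ≠ y i ∧ x i = 1 ∧ ∀ j : Fin m, j < i → x j = y j)

/-- The set of the first `a` elements of the Boolean cube `{0,1}^m` in Hales order. -/
def halesInit (m a : ℕ) : Set (Fin m → ZMod 2) :=
  {x | Nat.card {y : Fin m → ZMod 2 | halesLT y x} < a}

/-- The outer vertex boundary of a set in the Boolean cube graph. -/
def outerBoundary {m : ℕ} (A : Set (Fin m → ZMod 2)) : Set (Fin m → ZMod 2) :=
  {v | v ∉ A ∧ ∃ u ∈ A, hammingDist u v = 1}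

/-!
Harper's vertex-isoperimetric inequality `|Γ I_{|A|}| ≤ |ΓA|` gives the statement after
subtracting `|A|` on both sides. It is proved by induction on the dimension. Compressing `A` in
direction `i` (replacing each slice of `A` by the initial segment of the same size) does not
increase `|ΓA|`: by induction the slices of `ΓA` can only shrink, since the neighbourhood of an
initial segment is again an initial segment. Compressions strictly decrease the sum of the Hales
ranks of the elements, so eventually `A` is fixed by all of them. Such a set is an initial
segment, or it is `I ∪ {x + 1}`, where `I` is the set of elements before `x` and `x + 1` is the
antipode of `x`; in that case `|Γ(I ∪ {x})| ≤ |Γ(I ∪ {x + 1})|` follows by counting weights.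
-/

open Finset

lemma Finset.sum_lt_sum_of_card_eq {ι M : Type*} [DecidableEq ι] [AddCommMonoid M] [LinearOrder M]
    [IsOrderedCancelAddMonoid M] {s t : Finset ι} {f : ι → M} (hcard : #s = #t) (hne : s ≠ t)
    (hlt : ∀ a ∈ s \ t, ∀ b ∈ t \ s, f a < f b) : ∑ a ∈ s, f a < ∑ b ∈ t, f b := by
  have hts : (t \ s).Nonempty := by
    rw [nonempty_iff_ne_empty, Ne, sdiff_eq_empty_iff_subset]
    exact fun h => hne (eq_of_subset_of_card_le h hcard.le).symm
  obtain ⟨b₀, hb₀, hmin⟩ := (t \ s).exists_min_image f hts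
  have hst : (s \ t).Nonempty := by
    rw [← card_pos, card_sdiff_comm hcard]; exact card_pos.2 hts
  rw [← sum_sdiff_lt_sum_sdiff]
  calc ∑ a ∈ s \ t, f a < ∑ _a ∈ s \ t, f b₀ :=
        sum_lt_sum_of_nonempty hst fun a ha => hlt a ha b₀ hb₀
    _ = #(t \ s) • f b₀ := by rw [sum_const, card_sdiff_comm hcard]
    _ ≤ ∑ b ∈ t \ s, f b := card_nsmul_le_sum _ _ _ hmin

lemma ZMod.two_eq_zero_or_one (a : ZMod 2) : a = 0 ∨ a = 1 := by decide +revert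

lemma ZMod.two_ne_zero_iff {a : ZMod 2} : a ≠ 0 ↔ a = 1 := by decide +revert

lemma ZMod.two_eq_zero_of_ne_of_eq_one {a b : ZMod 2} (h : a ≠ b) (ha : a = 1) : b = 0 := by
  decide +revert

namespace BooleanCube

variable {n : ℕ}

section HalesOrder

/-- On each weight level the Hales order is lexicographic with `1` before `0`, hence the reversed
order `ℕᵒᵈ` on the values. -/
def halesKey (x : Fin n → ZMod 2) : ℕ ×ₗ Lex (Fin n → ℕᵒᵈ) :=
  toLex (hammingNorm x, toLex fun i => OrderDual.toDual (x i).val)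

lemma halesKey_injective : Function.Injective (halesKey (n := n)) := by
  intro x y h
  funext i
  have := congrFun (congrArg (fun k => ofLex (ofLex k).2) h) i
  exact ZMod.val_injective 2 (OrderDual.toDual.injective this)

lemma halesLT_iff_halesKey_lt {x y : Fin n → ZMod 2} :
    halesLT x y ↔ halesKey x < halesKey y := by
  have hval : ∀ a b : ZMod 2, (a ≠ b ∧ a = 1 ↔ b.val < a.val) := by decide
  rw [halesKey, halesKey, Prod.Lex.toLex_lt_toLex]
  show _ ↔ _ ∨ _ ∧ Pi.Lex (· < ·) (· < ·) _ _
  simp only [halesLT, Pi.Lex, Pi.toLex_apply, OrderDual.toDual_lt_toDual, ← hval,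
    OrderDual.toDual_inj, (ZMod.val_injective 2).eq_iff]
  grind

instance : DecidableRel (halesLT (m := n)) := fun x y => by unfold halesLT; infer_instance

lemma halesLT_irrefl (x : Fin n → ZMod 2) : ¬ halesLT x x := by
  simp [halesLT_iff_halesKey_lt]

lemma halesLT_trans {x y z : Fin n → ZMod 2} (hxy : halesLT x y) (hyz : halesLT y z) :
    halesLT x z := by
  rw [halesLT_iff_halesKey_lt] at *
  exact hxy.trans hyz

lemma halesLT_asymm {x y : Fin n → ZMod 2} (hxy : halesLT x y) : ¬ halesLT y x :=
  fun hyx => halesLT_irrefl x (halesLT_trans hxy hyx)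

lemma halesLT_trichotomy (x y : Fin n → ZMod 2) : halesLT x y ∨ x = y ∨ halesLT y x := by
  simp only [halesLT_iff_halesKey_lt, ← halesKey_injective.eq_iff]
  exact lt_trichotomy _ _

lemma hammingNorm_le_of_halesLT {x y : Fin n → ZMod 2} (h : halesLT x y) :
    hammingNorm x ≤ hammingNorm y := by
  rcases h with h | ⟨h, -⟩ <;> omega

lemma not_halesLT_zero (y : Fin n → ZMod 2) : ¬ halesLT y 0 := fun h => by
  have hy : y = 0 := hammingNorm_eq_zero.1 (by simpa using hammingNorm_le_of_halesLT h)
  exact halesLT_irrefl _ (hy ▸ h)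

end HalesOrder

section InitialSegments

def rank (x : Fin n → ZMod 2) : ℕ := #{y | halesLT y x}

lemma rank_lt_rank {x y : Fin n → ZMod 2} (h : halesLT x y) : rank x < rank y := by
  refine card_lt_card ⟨fun z hz => ?_, fun hsub => ?_⟩
  · simp only [mem_filter, mem_univ, true_and] at hz ⊢
    exact halesLT_trans hz h
  · simpa [halesLT_irrefl] using @hsub x (by simpa using h)

lemma rank_lt_rank_iff {x y : Fin n → ZMod 2} : rank x < rank y ↔ halesLT x y := by
  refine ⟨fun h => ?_, rank_lt_rank⟩
  rcases halesLT_trichotomy x y with hxy | rfl | hyx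
  · exact hxy
  · exact absurd h (lt_irrefl _)
  · exact absurd (rank_lt_rank hyx) h.not_gt

lemma rank_injective : Function.Injective (rank (n := n)) := by
  intro x y h
  rcases halesLT_trichotomy x y with hxy | hxy | hyx
  · exact absurd h (rank_lt_rank hxy).ne
  · exact hxy
  · exact absurd h (rank_lt_rank hyx).ne'

lemma rank_lt_card (x : Fin n → ZMod 2) : rank x < Fintype.card (Fin n → ZMod 2) :=
  card_lt_univ_of_notMem (x := x) (by simp [halesLT_irrefl])

lemma exists_rank_eq {k : ℕ} (hk : k < Fintype.card (Fin n → ZMod 2)) :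
    ∃ x : Fin n → ZMod 2, rank x = k := by
  obtain ⟨x, -, hx⟩ := surj_on_of_inj_on_of_card_le (s := univ) (t := range _)
    (fun x _ => rank x) (fun x _ => mem_range.2 (rank_lt_card x))
    (fun _ _ _ _ h => rank_injective h) (by simp) k (mem_range.2 hk)
  exact ⟨x, hx.symm⟩

def initSeg (n a : ℕ) : Finset (Fin n → ZMod 2) := {x | rank x < a}

@[simp] lemma mem_initSeg {a : ℕ} {x : Fin n → ZMod 2} : x ∈ initSeg n a ↔ rank x < a := by
  simp [initSeg]

lemma mem_initSeg_rank {x y : Fin n → ZMod 2} : y ∈ initSeg n (rank x) ↔ halesLT y x := by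
  rw [mem_initSeg, rank_lt_rank_iff]

lemma card_initSeg {a : ℕ} (ha : a ≤ Fintype.card (Fin n → ZMod 2)) : #(initSeg n a) = a := by
  have himage : (initSeg n a).image rank = range a := by
    ext k
    simp only [mem_image, mem_initSeg, mem_range]
    constructor
    · rintro ⟨x, hx, rfl⟩
      exact hx
    · intro hk
      obtain ⟨x, rfl⟩ := exists_rank_eq (hk.trans_le ha)
      exact ⟨x, hk, rfl⟩
  rw [← card_image_of_injective _ rank_injective, himage, card_range]

lemma initSeg_union (a b : ℕ) : initSeg n a ∪ initSeg n b = initSeg n (max a b) := by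
  ext x
  simp only [mem_union, mem_initSeg]
  omega

def IsInitial (A : Finset (Fin n → ZMod 2)) : Prop := ∀ x ∈ A, ∀ y, halesLT y x → y ∈ A

lemma isInitial_initSeg (a : ℕ) : IsInitial (initSeg n a) :=
  fun _ hx _ hy => mem_initSeg.2 ((rank_lt_rank hy).trans (mem_initSeg.1 hx))

lemma IsInitial.eq_initSeg {A : Finset (Fin n → ZMod 2)} (hA : IsInitial A) :
    A = initSeg n #A := by
  ext x
  rw [mem_initSeg]
  constructor
  · intro hx
    have hsub : insert x ({y | halesLT y x} : Finset _) ⊆ A := by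
      intro y hy
      rcases mem_insert.1 hy with rfl | hy
      · exact hx
      · exact hA x hx y (by simpa using hy)
    have := card_le_card hsub
    rwa [card_insert_of_notMem (by simp [halesLT_irrefl])] at this
  · intro hx
    by_contra hxA
    have hsub : A ⊆ ({y | halesLT y x} : Finset _) := by
      intro y hy
      rcases halesLT_trichotomy y x with hyx | rfl | hxy
      · simpa using hyx
      · exact absurd hy hxA
      · exact absurd (hA y hy x hxy) hxA
    exact (card_le_card hsub).not_gt hx

lemma card_union_of_isInitial {A B : Finset (Fin n → ZMod 2)} (hA : IsInitial A)
    (hB : IsInitial B) : #(A ∪ B) = max #A #B := by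
  rw [hA.eq_initSeg, hB.eq_initSeg, initSeg_union, card_initSeg, card_initSeg (card_le_univ _),
    card_initSeg (card_le_univ _)]
  exact max_le (card_le_univ _) (card_le_univ _)

lemma initSeg_rank_add_one (x : Fin n → ZMod 2) :
    initSeg n (rank x + 1) = insert x (initSeg n (rank x)) := by
  ext y
  simp only [mem_initSeg, mem_insert, Nat.lt_succ_iff_lt_or_eq, rank_injective.eq_iff]
  exact or_comm

end InitialSegments

section Flips

def supp (x : Fin n → ZMod 2) : Finset (Fin n) := {i | x i ≠ 0}

@[simp] lemma mem_supp {x : Fin n → ZMod 2} {i : Fin n} : i ∈ supp x ↔ x i = 1 := by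
  simp [supp, ZMod.two_ne_zero_iff]

lemma hammingNorm_eq_card_supp (x : Fin n → ZMod 2) : hammingNorm x = #(supp x) := rfl

lemma supp_injective : Function.Injective (supp (n := n)) := by
  intro x y h
  funext i
  have hZ2 : ∀ a b : ZMod 2, (a = 1 ↔ b = 1) → a = b := by decide
  exact hZ2 _ _ (by simpa using congrArg (i ∈ ·) h)

lemma eq_of_supp_subset {x y : Fin n → ZMod 2} (hsub : supp x ⊆ supp y)
    (hnorm : hammingNorm y ≤ hammingNorm x) : x = y :=
  supp_injective (eq_of_subset_of_card_le hsub hnorm)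

lemma supp_add_single_of_eq_zero {x : Fin n → ZMod 2} {i : Fin n} (h : x i = 0) :
    supp (x + Pi.single i 1) = insert i (supp x) := by
  ext j
  by_cases hj : j = i
  · subst hj; simp [h]
  · simp [hj]

lemma supp_add_single_of_eq_one {x : Fin n → ZMod 2} {i : Fin n} (h : x i = 1) :
    supp (x + Pi.single i 1) = (supp x).erase i := by
  ext j
  by_cases hj : j = i
  · subst hj; simp [h]
  · simp [hj]

lemma hammingNorm_add_single_of_eq_zero {x : Fin n → ZMod 2} {i : Fin n} (h : x i = 0) :
    hammingNorm (x + Pi.single i 1) = hammingNorm x + 1 := by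
  rw [hammingNorm_eq_card_supp, supp_add_single_of_eq_zero h, card_insert_of_notMem (by simp [h])]
  rfl

lemma hammingNorm_add_single_of_eq_one {x : Fin n → ZMod 2} {i : Fin n} (h : x i = 1) :
    hammingNorm (x + Pi.single i 1) + 1 = hammingNorm x := by
  rw [hammingNorm_eq_card_supp, supp_add_single_of_eq_one h,
    card_erase_add_one (mem_supp.2 h)]
  rfl

lemma supp_single (i : Fin n) : supp (Pi.single i (1 : ZMod 2)) = {i} := by
  ext j
  by_cases hj : j = i <;> simp [hj]

lemma hammingNorm_le_one_iff {w : Fin n → ZMod 2} :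
    hammingNorm w ≤ 1 ↔ w = 0 ∨ ∃ i, w = Pi.single i 1 := by
  rw [hammingNorm_eq_card_supp, Nat.le_one_iff_eq_zero_or_eq_one, card_eq_zero, card_eq_one]
  have hsupp0 : supp (0 : Fin n → ZMod 2) = ∅ := by ext; simp
  simp only [← hsupp0, ← supp_single, supp_injective.eq_iff]

lemma hammingDist_le_one_iff {u v : Fin n → ZMod 2} :
    hammingDist u v ≤ 1 ↔ v = u ∨ ∃ i, v = u + Pi.single i 1 := by
  rw [hammingDist_eq_hammingNorm, hammingNorm_le_one_iff, neg_add_eq_zero, eq_comm]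
  simp only [neg_add_eq_iff_eq_add]

lemma hammingDist_add_single (x : Fin n → ZMod 2) (i : Fin n) :
    hammingDist x (x + Pi.single i 1) = 1 := by
  rw [hammingDist_eq_hammingNorm, neg_add_cancel_left,
    hammingNorm_eq_card_supp, supp_single, card_singleton]

lemma hammingNorm_le_add_hammingDist (u v : Fin n → ZMod 2) :
    hammingNorm v ≤ hammingNorm u + hammingDist u v := by
  rw [← hammingDist_zero_right, ← hammingDist_zero_right, hammingDist_comm u v, add_comm]
  exact hammingDist_triangle _ _ _

lemma hammingNorm_add_one (x : Fin n → ZMod 2) : hammingNorm (x + 1) = n - hammingNorm x := by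
  have hsupp : supp (x + 1) = (supp x)ᶜ := by
    ext j
    simp only [mem_supp, mem_compl, Pi.add_apply, Pi.one_apply]
    generalize x j = a
    decide +revert
  rw [hammingNorm_eq_card_supp, hsupp, card_compl, Fintype.card_fin, hammingNorm_eq_card_supp]

end Flips

section Neighbourhoods

/-- The paper's `ΓA`: `A` together with its neighbours in the cube graph. -/
def closedNbhd (A : Finset (Fin n → ZMod 2)) : Finset (Fin n → ZMod 2) :=
  {v | ∃ u ∈ A, hammingDist u v ≤ 1}

variable {A B : Finset (Fin n → ZMod 2)}

@[simp] lemma mem_closedNbhd {v : Fin n → ZMod 2} :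
    v ∈ closedNbhd A ↔ ∃ u ∈ A, hammingDist u v ≤ 1 := by
  simp [closedNbhd]

@[simp] lemma closedNbhd_empty : closedNbhd (∅ : Finset (Fin n → ZMod 2)) = ∅ := by
  ext v
  simp

lemma subset_closedNbhd : A ⊆ closedNbhd A :=
  fun v hv => mem_closedNbhd.2 ⟨v, hv, by simp⟩

lemma closedNbhd_union : closedNbhd (A ∪ B) = closedNbhd A ∪ closedNbhd B := by
  ext v
  simp only [mem_closedNbhd, mem_union, or_and_right, exists_or]

lemma closedNbhd_singleton (z : Fin n → ZMod 2) :
    closedNbhd {z} = insert z (univ.image fun i => z + Pi.single i 1) := by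
  ext v
  simp [hammingDist_le_one_iff, eq_comm]

lemma add_single_injective (z : Fin n → ZMod 2) :
    Function.Injective fun i : Fin n => z + Pi.single i 1 := by
  intro i j h
  simpa [supp_single] using congrArg supp (add_left_cancel h)

lemma card_closedNbhd_singleton (z : Fin n → ZMod 2) : #(closedNbhd {z}) = n + 1 := by
  rw [closedNbhd_singleton, card_insert_of_notMem,
    card_image_of_injective _ (add_single_injective z), card_univ, Fintype.card_fin]
  simp only [mem_image, mem_univ, true_and, not_exists]
  intro i h
  simpa using congrFun (add_eq_left.1 h) i

lemma hammingNorm_le_of_mem_closedNbhd {A : Finset (Fin n → ZMod 2)} {c : ℕ}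
    (hA : ∀ u ∈ A, hammingNorm u ≤ c) {v : Fin n → ZMod 2} (hv : v ∈ closedNbhd A) :
    hammingNorm v ≤ c + 1 := by
  obtain ⟨u, hu, huv⟩ := mem_closedNbhd.1 hv
  have := hammingNorm_le_add_hammingDist u v
  have := hA u hu
  omega

lemma card_closedNbhd_insert (z : Fin n → ZMod 2) (A : Finset (Fin n → ZMod 2)) :
    #(closedNbhd (insert z A)) = #(closedNbhd {z} \ closedNbhd A) + #(closedNbhd A) := by
  rw [insert_eq, closedNbhd_union, card_sdiff_add_card]

lemma add_single_add_single (x : Fin n → ZMod 2) (i : Fin n) :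
    x + Pi.single i 1 + Pi.single i 1 = x :=
  funext fun _ => CharTwo.add_cancel_right _ _

lemma halesLT_add_single_iff {x y : Fin n → ZMod 2} {i : Fin n} (h : x i = y i) :
    halesLT (x + Pi.single i 1) (y + Pi.single i 1) ↔ halesLT x y := by
  have hnorm : (hammingNorm (x + Pi.single i 1) < hammingNorm (y + Pi.single i 1) ↔
      hammingNorm x < hammingNorm y) ∧
      (hammingNorm (x + Pi.single i 1) = hammingNorm (y + Pi.single i 1) ↔
      hammingNorm x = hammingNorm y) := by
    rcases ZMod.two_eq_zero_or_one (x i) with hx | hx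
    · rw [hammingNorm_add_single_of_eq_zero hx, hammingNorm_add_single_of_eq_zero (h ▸ hx)]
      omega
    · have := hammingNorm_add_single_of_eq_one hx
      have := hammingNorm_add_single_of_eq_one (h ▸ hx)
      omega
  have hcancel : ∀ k, (x + Pi.single i 1 : Fin n → ZMod 2) k =
      (y + Pi.single i 1 : Fin n → ZMod 2) k ↔ x k = y k := fun k => add_left_inj _
  have hoff : ∀ j, x j ≠ y j → (x + Pi.single i 1 : Fin n → ZMod 2) j = x j := by
    intro j hj
    rw [Pi.add_apply, Pi.single_eq_of_ne (by rintro rfl; exact hj h), add_zero]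
  unfold halesLT
  rw [hnorm.1, hnorm.2]
  refine or_congr_right (and_congr_right fun _ => exists_congr fun j => ?_)
  simp only [ne_eq, hcancel]
  exact and_congr_right fun hj => and_congr_left' (by rw [hoff j hj])

/-- If the first difference `d` of `w` and `v` precedes the last `1` of `w`, it remains their
first difference; otherwise both sides reduce to the common part of `w` and `v` before `d`. -/
lemma halesLT_or_eq_add_single_of_halesLT {w v : Fin n → ZMod 2} {i M : Fin n}
    (hwv : halesLT w v) (hnorm : hammingNorm w = hammingNorm v) (hvi : v i = 1) (hwi : w i = 0)
    (hM : w M = 1) (hMmax : ∀ j, w j = 1 → j ≤ M) :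
    halesLT (w + Pi.single M 1) (v + Pi.single i 1) ∨ w + Pi.single M 1 = v + Pi.single i 1 := by
  obtain ⟨d, hdne, hwd, hbelow⟩ := (hwv.resolve_left (by omega)).2
  have hvd : v d = 0 := ZMod.two_eq_zero_of_ne_of_eq_one hdne hwd
  have hdi : d < i := by
    rcases lt_trichotomy d i with h | rfl | h
    · exact h
    · exact absurd (hwi ▸ hwd) zero_ne_one
    · exact absurd (hbelow i h) (by rw [hwi, hvi]; decide)
  have hnorm' : hammingNorm (w + Pi.single M 1) = hammingNorm (v + Pi.single i 1) := by
    have := hammingNorm_add_single_of_eq_one hM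
    have := hammingNorm_add_single_of_eq_one hvi
    omega
  rcases (hMmax d hwd).lt_or_eq with hdM | rfl
  · refine Or.inl (Or.inr ⟨hnorm', d, ?_, ?_, fun k hk => ?_⟩)
    · simp [hdM.ne, hdi.ne, hwd, hvd]
    · simp [hdM.ne, hwd]
    · simp [(hk.trans hdM).ne, (hk.trans hdi).ne, hbelow k hk]
  · refine Or.inr (eq_of_supp_subset (fun k hk => ?_) hnorm'.ge)
    rw [mem_supp] at hk ⊢
    have hkd : k < d := by
      by_contra hkd
      rcases (not_lt.1 hkd).lt_or_eq with hdk | rfl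
      · have hwk : w k = 1 := by simpa [hdk.ne'] using hk
        exact (hMmax k hwk).not_gt hdk
      · simp [hwd] at hk
    simpa [hkd.ne, (hkd.trans hdi).ne, hbelow k hkd] using hk

lemma exists_halesLT_near_of_le {u w : Fin n → ZMod 2} (huw : halesLT u w)
    (hle : hammingNorm w ≤ hammingNorm u) : ∃ u', halesLT u' u ∧ hammingDist u' w ≤ 1 := by
  obtain ⟨j, hj⟩ : (supp w).Nonempty := by
    rw [← card_pos, ← hammingNorm_eq_card_supp, Nat.pos_iff_ne_zero]
    intro h0
    rw [hammingNorm_eq_zero] at h0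
    exact not_halesLT_zero u (h0 ▸ huw)
  have := hammingNorm_add_single_of_eq_one (mem_supp.1 hj)
  exact ⟨w + Pi.single j 1, Or.inl (by omega), by rw [hammingDist_comm, hammingDist_add_single]⟩

lemma exists_near_of_halesLT_add_single {u w : Fin n → ZMod 2} {i : Fin n}
    (hwv : halesLT w (u + Pi.single i 1)) (hlt : hammingNorm u < hammingNorm w) :
    ∃ u', (u' = u ∨ halesLT u' u) ∧ hammingDist u' w ≤ 1 := by
  have hnear : ∀ j, hammingDist (w + Pi.single j 1) w ≤ 1 := fun j => by
    rw [hammingDist_comm, hammingDist_add_single]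
  have hvnorm := hammingNorm_le_of_halesLT hwv
  have hui : u i = 0 := by
    by_contra hui
    have := hammingNorm_add_single_of_eq_one ((ZMod.two_ne_zero_iff).1 hui)
    omega
  have hvi : (u + Pi.single i 1 : Fin n → ZMod 2) i = 1 := by simp [hui]
  have hwv' : hammingNorm w = hammingNorm (u + Pi.single i 1) := by
    have := hammingNorm_add_single_of_eq_zero hui
    omega
  rcases ZMod.two_eq_zero_or_one (w i) with hwi | hwi
  · obtain ⟨M, hM, hMmax⟩ := (supp w).exists_max_image id
      (by rw [← card_pos, ← hammingNorm_eq_card_supp]; omega)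
    have := halesLT_or_eq_add_single_of_halesLT hwv hwv' hvi hwi (mem_supp.1 hM)
      (fun j hj => hMmax j (mem_supp.2 hj))
    rw [add_single_add_single] at this
    exact ⟨w + Pi.single M 1, this.symm, hnear M⟩
  · have := (halesLT_add_single_iff (hwi.trans hvi.symm)).2 hwv
    rw [add_single_add_single] at this
    exact ⟨w + Pi.single i 1, Or.inr this, hnear i⟩

lemma IsInitial.closedNbhd {D : Finset (Fin n → ZMod 2)} (hD : IsInitial D) :
    IsInitial (closedNbhd D) := by
  intro v hv w hwv
  obtain ⟨u, huD, huv⟩ := mem_closedNbhd.1 hv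
  suffices ∃ u', (u' = u ∨ halesLT u' u) ∧ hammingDist u' w ≤ 1 by
    obtain ⟨u', hu', hd⟩ := this
    exact mem_closedNbhd.2 ⟨u', hu'.elim (· ▸ huD) (hD u huD u'), hd⟩
  rcases halesLT_trichotomy w u with hwu | rfl | huw
  · exact ⟨w, Or.inr hwu, by simp⟩
  · exact ⟨w, Or.inl rfl, by simp⟩
  rcases le_or_gt (hammingNorm w) (hammingNorm u) with hle | hlt
  · obtain ⟨u', hu', hd⟩ := exists_halesLT_near_of_le huw hle
    exact ⟨u', Or.inr hu', hd⟩
  · obtain rfl | ⟨i, rfl⟩ := hammingDist_le_one_iff.1 huv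
    · exact absurd huw (halesLT_asymm hwv)
    · exact exists_near_of_halesLT_add_single hwv hlt

end Neighbourhoods

section Slices

variable (i : Fin (n + 1))

lemma hammingDist_insertNth (a b : ZMod 2) (y z : Fin n → ZMod 2) :
    hammingDist (Fin.insertNth i a y : Fin (n + 1) → ZMod 2) (Fin.insertNth i b z) =
      (if a = b then 0 else 1) + hammingDist y z := by
  simp only [hammingDist, card_filter, Fin.sum_univ_succAbove _ i, Fin.insertNth_apply_same,
    Fin.insertNth_apply_succAbove, ne_eq, ite_not]

lemma hammingNorm_insertNth (a : ZMod 2) (y : Fin n → ZMod 2) :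
    hammingNorm (Fin.insertNth i a y : Fin (n + 1) → ZMod 2) =
      (if a = 0 then 0 else 1) + hammingNorm y := by
  simp only [hammingNorm, card_filter, Fin.sum_univ_succAbove _ i, Fin.insertNth_apply_same,
    Fin.insertNth_apply_succAbove, ne_eq, ite_not]

lemma halesLT_insertNth_iff (ε : ZMod 2) {y z : Fin n → ZMod 2} :
    halesLT (Fin.insertNth i ε y : Fin (n + 1) → ZMod 2) (Fin.insertNth i ε z) ↔
      halesLT y z := by
  unfold halesLT
  simp only [hammingNorm_insertNth, Nat.add_lt_add_iff_left, Nat.add_left_cancel_iff,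
    Fin.exists_iff_succAbove i, Fin.insertNth_apply_same, Fin.insertNth_apply_succAbove, ne_eq,
    not_true_eq_false, false_and, false_or]
  refine or_congr_right (and_congr_right fun _ => exists_congr fun j =>
    and_congr_right fun _ => and_congr_right fun _ => ?_)
  rw [Fin.forall_iff_succAbove i]
  simp [Fin.succAbove_lt_succAbove_iff]

def slice (ε : ZMod 2) (A : Finset (Fin (n + 1) → ZMod 2)) : Finset (Fin n → ZMod 2) :=
  {y | Fin.insertNth i ε y ∈ A}

variable {i}

@[simp] lemma mem_slice {ε : ZMod 2} {A : Finset (Fin (n + 1) → ZMod 2)} {y : Fin n → ZMod 2} :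
    y ∈ slice i ε A ↔ Fin.insertNth i ε y ∈ A := by
  simp [slice]

variable (i)

lemma sum_eq_sum_slice {M : Type*} [AddCommMonoid M] (A : Finset (Fin (n + 1) → ZMod 2))
    (g : (Fin (n + 1) → ZMod 2) → M) :
    ∑ x ∈ A, g x = ∑ ε, ∑ y ∈ slice i ε A, g (Fin.insertNth i ε y) := by
  rw [← sum_fiberwise A (· i)]
  refine sum_congr rfl fun ε _ =>
    sum_nbij' (Fin.removeNth i) (fun y => (Fin.insertNth i ε y : Fin (n + 1) → ZMod 2))
      ?_ ?_ ?_ ?_ ?_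
  · intro x hx
    simp only [mem_filter] at hx
    simpa [← hx.2] using hx.1
  · intro y hy
    simpa using hy
  · intro x hx
    simp only [mem_filter] at hx
    simp [← hx.2]
  · simp
  · intro x hx
    simp only [mem_filter] at hx
    simp [← hx.2]

lemma card_eq_sum_card_slice (A : Finset (Fin (n + 1) → ZMod 2)) :
    #A = ∑ ε, #(slice i ε A) := by
  simpa only [card_eq_sum_ones] using sum_eq_sum_slice i A (fun _ => 1)

lemma eq_of_slice_eq {A B : Finset (Fin (n + 1) → ZMod 2)}
    (h : ∀ ε, slice i ε A = slice i ε B) : A = B := by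
  ext x
  rw [← Fin.insertNth_self_removeNth i x, ← mem_slice, ← mem_slice, h]

lemma slice_closedNbhd (ε : ZMod 2) (A : Finset (Fin (n + 1) → ZMod 2)) :
    slice i ε (closedNbhd A) = closedNbhd (slice i ε A) ∪ slice i (ε + 1) A := by
  ext y
  have hε : ∀ a : ZMod 2, a ≠ ε ↔ a = ε + 1 := by decide +revert
  simp only [mem_slice, mem_closedNbhd, mem_union]
  constructor
  · rintro ⟨u, hu, hd⟩
    rw [← Fin.insertNth_self_removeNth i u, hammingDist_insertNth] at hd
    by_cases huε : u i = ε
    · exact Or.inl ⟨Fin.removeNth i u, by simpa [← huε] using hu, by simpa [huε] using hd⟩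
    · have : Fin.removeNth i u = y := by simpa [huε, hammingDist_eq_zero] using hd
      exact Or.inr (by rw [← this, ← (hε _).1 huε]; simpa using hu)
  · rintro (⟨z, hz, hd⟩ | hy)
    · exact ⟨_, hz, by simpa [hammingDist_insertNth] using hd⟩
    · exact ⟨_, hy, by simp [hammingDist_insertNth]⟩

end Slices

section Compression

variable (i : Fin (n + 1))

/-- The `i`-compression of `A` (see `slice_compress`). -/
def compress (A : Finset (Fin (n + 1) → ZMod 2)) : Finset (Fin (n + 1) → ZMod 2) :=
  {x | Fin.removeNth i x ∈ initSeg n #(slice i (x i) A)}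

lemma slice_compress (ε : ZMod 2) (A : Finset (Fin (n + 1) → ZMod 2)) :
    slice i ε (compress i A) = initSeg n #(slice i ε A) := by
  ext y
  simp [compress]

lemma card_compress (A : Finset (Fin (n + 1) → ZMod 2)) : #(compress i A) = #A := by
  simp only [card_eq_sum_card_slice i, slice_compress, card_initSeg (card_le_univ _)]

lemma card_closedNbhd_compress_le
    (ih : ∀ B : Finset (Fin n → ZMod 2), #(closedNbhd (initSeg n #B)) ≤ #(closedNbhd B))
    (A : Finset (Fin (n + 1) → ZMod 2)) : #(closedNbhd (compress i A)) ≤ #(closedNbhd A) := by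
  rw [card_eq_sum_card_slice i, card_eq_sum_card_slice i (closedNbhd A)]
  refine sum_le_sum fun ε _ => ?_
  rw [slice_closedNbhd, slice_closedNbhd, slice_compress, slice_compress,
    card_union_of_isInitial (isInitial_initSeg _).closedNbhd (isInitial_initSeg _),
    card_initSeg (card_le_univ _)]
  exact max_le ((ih _).trans (card_le_card subset_union_left)) (card_le_card subset_union_right)

lemma sum_rank_insertNth_initSeg_lt (ε : ZMod 2) {S : Finset (Fin n → ZMod 2)}
    (h : initSeg n #S ≠ S) :
    ∑ y ∈ initSeg n #S, rank (Fin.insertNth i ε y : Fin (n + 1) → ZMod 2) <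
      ∑ y ∈ S, rank (Fin.insertNth i ε y : Fin (n + 1) → ZMod 2) := by
  refine sum_lt_sum_of_card_eq (card_initSeg (card_le_univ _)) h fun a ha b hb => ?_
  simp only [mem_sdiff, mem_initSeg] at ha hb
  exact rank_lt_rank ((halesLT_insertNth_iff i ε).2 (rank_lt_rank_iff.1 (by omega)))

lemma sum_rank_compress_lt {A : Finset (Fin (n + 1) → ZMod 2)} (h : compress i A ≠ A) :
    ∑ x ∈ compress i A, rank x < ∑ x ∈ A, rank x := by
  rw [sum_eq_sum_slice i, sum_eq_sum_slice i A]
  obtain ⟨ε, hε⟩ : ∃ ε, slice i ε (compress i A) ≠ slice i ε A := by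
    by_contra! h'
    exact h (eq_of_slice_eq i h')
  refine sum_lt_sum (fun ε' _ => ?_) ⟨ε, mem_univ _, ?_⟩
  · rw [slice_compress]
    rcases eq_or_ne (initSeg n #(slice i ε' A)) (slice i ε' A) with h | h
    · rw [h]
    · exact (sum_rank_insertNth_initSeg_lt i ε' h).le
  · rw [slice_compress] at hε ⊢
    exact sum_rank_insertNth_initSeg_lt i ε hε

end Compression

section Compressed

variable {A : Finset (Fin (n + 1) → ZMod 2)}

/-- Two points agreeing in a coordinate `j` lie in a common slice in direction `j`, which is an
initial segment. -/
lemma eq_add_one_of_compressed (hA : ∀ i, compress i A = A) {x y : Fin (n + 1) → ZMod 2}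
    (hx : x ∉ A) (hy : y ∈ A) (hxy : halesLT x y) : y = x + 1 := by
  funext j
  by_contra hj
  have hyj : y j = x j := by
    have hZ2 : ∀ a b : ZMod 2, a ≠ b + 1 → a = b := by decide
    exact hZ2 _ _ hj
  have hslice : IsInitial (slice j (x j) A) := by
    rw [← hA j, slice_compress]
    exact isInitial_initSeg _
  have hy' : Fin.removeNth j y ∈ slice j (x j) A := by
    simpa [← hyj, Fin.insertNth_self_removeNth] using hy
  have hxy' : halesLT (Fin.removeNth j x) (Fin.removeNth j y) := by
    rwa [← halesLT_insertNth_iff j (x j), Fin.insertNth_self_removeNth, ← hyj,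
      Fin.insertNth_self_removeNth]
  exact hx (by simpa [Fin.insertNth_self_removeNth] using hslice _ hy' _ hxy')

lemma exists_eq_insert_initSeg_of_compressed (hA : ∀ i, compress i A = A)
    (hA' : ¬ IsInitial A) :
    ∃ x, halesLT x (x + 1) ∧ A = insert (x + 1) (initSeg (n + 1) (rank x)) := by
  simp only [IsInitial, not_forall, exists_prop] at hA'
  obtain ⟨y, hy, x', hx'y, hx'⟩ := hA'
  obtain ⟨x, hx, hmin⟩ :=
    exists_min_image ({z | z ∉ A} : Finset _) rank ⟨x', by simpa using hx'⟩
  simp only [mem_filter, mem_univ, true_and] at hx hmin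
  have hxy : halesLT x y :=
    rank_lt_rank_iff.1 ((hmin x' hx').trans_lt (rank_lt_rank hx'y))
  obtain rfl := eq_add_one_of_compressed hA hx hy hxy
  refine ⟨x, hxy, ?_⟩
  ext z
  rw [mem_insert, mem_initSeg_rank]
  constructor
  · intro hz
    rcases halesLT_trichotomy z x with hzx | rfl | hxz
    · exact Or.inr hzx
    · exact absurd hz hx
    · exact Or.inl (eq_add_one_of_compressed hA hx hz hxz)
  · rintro (rfl | hzx)
    · exact hy
    · by_contra hz
      exact (hmin z hz).not_gt (rank_lt_rank hzx)

end Compressed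

section Antipodes

def aboveSupp (x : Fin n → ZMod 2) : Finset (Fin n) := {j | ∀ k, x k = 1 → k < j}

/-- Apart from flips after its last `1`, every neighbour of `x` is a neighbour of an element
before `x`: a flip `0 → 1` at `j` followed by the flip `1 → 0` at the last `1` of `x` leads to
an element of the same weight with first difference at `j`. -/
lemma closedNbhd_singleton_sdiff_subset {x : Fin n → ZMod 2} (hx : x ≠ 0) :
    closedNbhd {x} \ closedNbhd (initSeg n (rank x)) ⊆
      (aboveSupp x).image fun j => x + Pi.single j 1 := by
  obtain ⟨M, hM, hMmax⟩ := (supp x).exists_max_image id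
    (by rwa [← card_pos, ← hammingNorm_eq_card_supp, hammingNorm_pos_iff])
  rw [mem_supp] at hM
  have hdown : ∀ j, x j = 1 → x + Pi.single j 1 ∈ initSeg n (rank x) := fun j hj => by
    rw [mem_initSeg_rank]
    have := hammingNorm_add_single_of_eq_one hj
    exact Or.inl (by omega)
  have hxJ : x ∈ closedNbhd (initSeg n (rank x)) :=
    mem_closedNbhd.2 ⟨_, hdown M hM, by rw [hammingDist_comm, hammingDist_add_single]⟩
  intro v hv
  simp only [mem_sdiff, closedNbhd_singleton, mem_insert, mem_image, mem_univ, true_and] at hv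
  obtain ⟨rfl | ⟨j, rfl⟩, hvJ⟩ := hv
  · exact absurd hxJ hvJ
  refine mem_image.2 ⟨j, mem_filter.2 ⟨mem_univ _, fun k hk => ?_⟩, rfl⟩
  by_contra hjk
  rcases ZMod.two_eq_zero_or_one (x j) with hxj | hxj
  · have hjM : j < M :=
      (lt_of_le_of_ne (not_lt.1 hjk) (by rintro rfl; simp [hxj] at hk)).trans_le
        (hMmax k (mem_supp.2 hk))
    have hlower : x + Pi.single j 1 + Pi.single M 1 ∈ initSeg n (rank x) := by
      rw [mem_initSeg_rank]
      have h1 := hammingNorm_add_single_of_eq_zero hxj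
      have h2 := hammingNorm_add_single_of_eq_one (x := x + Pi.single j 1) (i := M)
        (by simp [hjM.ne', hM])
      refine Or.inr ⟨by omega, j, by simp [hjM.ne, hxj], by simp [hjM.ne, hxj], fun k hk => ?_⟩
      simp [hk.ne, (hk.trans hjM).ne]
    exact hvJ (mem_closedNbhd.2 ⟨_, hlower, by
      rw [hammingDist_comm, hammingDist_add_single]⟩)
  · exact hvJ (subset_closedNbhd (hdown j hxj))

lemma disjoint_aboveSupp_supp (x : Fin n → ZMod 2) : Disjoint (aboveSupp x) (supp x) := by
  rw [disjoint_left]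
  intro j hj hj'
  simp only [aboveSupp, mem_filter, mem_univ, true_and] at hj
  exact lt_irrefl j (hj j (mem_supp.1 hj'))

lemma card_aboveSupp_add_hammingNorm_le (x : Fin n → ZMod 2) :
    #(aboveSupp x) + hammingNorm x ≤ n := by
  rw [hammingNorm_eq_card_supp, ← card_union_of_disjoint (disjoint_aboveSupp_supp x)]
  simpa using card_le_univ (aboveSupp x ∪ supp x)

/-- If `x` is not the first element of its weight, some `0` of `x` precedes a `1` of `x`. -/
lemma card_aboveSupp_add_hammingNorm_lt {u x : Fin n → ZMod 2} (hux : halesLT u x)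
    (h : hammingNorm u = hammingNorm x) : #(aboveSupp x) + hammingNorm x < n := by
  obtain ⟨d, hdne, hud, hbelow⟩ := (hux.resolve_left (by omega)).2
  have hxd : x d = 0 := ZMod.two_eq_zero_of_ne_of_eq_one hdne hud
  obtain ⟨k, hk, hdk⟩ : ∃ k, x k = 1 ∧ d < k := by
    by_contra! hlast
    have hsub : insert d (supp x) ⊆ supp u := by
      intro j hj
      rcases mem_insert.1 hj with rfl | hjx
      · exact mem_supp.2 hud
      · rw [mem_supp] at hjx
        have hjd : j < d := lt_of_le_of_ne (hlast j hjx) (by rintro rfl; simp [hxd] at hjx)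
        rw [mem_supp, hbelow j hjd, hjx]
    have := card_le_card hsub
    rw [card_insert_of_notMem (by simp [hxd]), ← hammingNorm_eq_card_supp,
      ← hammingNorm_eq_card_supp] at this
    omega
  have hd : d ∉ aboveSupp x ∪ supp x := by
    simp only [aboveSupp, mem_union, mem_filter, mem_univ, true_and, mem_supp, hxd, not_or]
    exact ⟨fun hall => (hall k hk).not_gt hdk, zero_ne_one⟩
  have := card_le_univ (insert d (aboveSupp x ∪ supp x))
  rw [card_insert_of_notMem hd, card_union_of_disjoint (disjoint_aboveSupp_supp x),
    ← hammingNorm_eq_card_supp, Fintype.card_fin] at this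
  omega

lemma sub_le_card_closedNbhd_singleton_sdiff {z : Fin n → ZMod 2} {J : Finset (Fin n → ZMod 2)}
    {c : ℕ} (hJ : ∀ v ∈ J, hammingNorm v ≤ c) (hc : c ≤ hammingNorm z) :
    n - c ≤ #(closedNbhd {z} \ J) := by
  have hfar : ∀ v ∈ closedNbhd {z}, c < hammingNorm v → v ∈ closedNbhd {z} \ J :=
    fun v hv hcv => mem_sdiff.2 ⟨hv, fun hvJ => (hJ v hvJ).not_gt hcv⟩
  set U := ({j | z j = 0} : Finset (Fin n)).image fun j => z + Pi.single j 1
  have hUcard : #U + hammingNorm z = n := by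
    rw [card_image_of_injective _ (add_single_injective z)]
    have := card_filter_add_card_filter_not (s := univ) (fun j => z j = 0)
    rwa [card_univ, Fintype.card_fin] at this
  have hU : ∀ v ∈ U, v ∈ closedNbhd {z} ∧ hammingNorm v = hammingNorm z + 1 := by
    intro v hv
    obtain ⟨j, hj, rfl⟩ := mem_image.1 hv
    rw [mem_filter] at hj
    exact ⟨by simp [closedNbhd_singleton], hammingNorm_add_single_of_eq_zero hj.2⟩
  have hzU : z ∉ U := fun hz => by simpa using (hU z hz).2
  rcases Nat.lt_or_ge (c + 1) (hammingNorm z) with hc2 | hc2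
  · have hsub : closedNbhd {z} ⊆ closedNbhd {z} \ J := fun v hv => hfar v hv <| by
      have hzv : hammingDist z v ≤ 1 := by simpa using hv
      have := hammingNorm_le_add_hammingDist v z
      rw [hammingDist_comm] at this
      omega
    have := card_le_card hsub
    rw [card_closedNbhd_singleton] at this
    omega
  rcases hc2.lt_or_eq with hc1 | hc1
  · have hsub : U ⊆ closedNbhd {z} \ J := fun v hv =>
      hfar v (hU v hv).1 (by have := (hU v hv).2; omega)
    have := card_le_card hsub
    omega
  · have hsub : insert z U ⊆ closedNbhd {z} \ J := by
      intro v hv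
      rcases mem_insert.1 hv with rfl | hv
      · exact hfar v (subset_closedNbhd (mem_singleton_self v)) (by omega)
      · exact hfar v (hU v hv).1 (by have := (hU v hv).2; omega)
    have := card_le_card hsub
    rw [card_insert_of_notMem hzU] at this
    omega

/-- If `x` starts with `1`, so does every element of weight `|x|` before `x`, hence so does every
element of weight `|x| + 1` in the neighbourhood of those before `x`. -/
lemma notMem_closedNbhd_initSeg {x v : Fin (n + 1) → ZMod 2} (hx0 : x 0 = 1) (hv0 : v 0 = 0)
    (hv : hammingNorm v = hammingNorm x + 1) : v ∉ closedNbhd (initSeg (n + 1) (rank x)) := by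
  intro hvJ
  obtain ⟨u, hu, huv⟩ := mem_closedNbhd.1 hvJ
  rw [mem_initSeg_rank] at hu
  have hnorm := hammingNorm_le_of_halesLT hu
  obtain rfl | ⟨k, rfl⟩ := hammingDist_le_one_iff.1 huv
  · omega
  rcases ZMod.two_eq_zero_or_one (u k) with huk | huk
  · have := hammingNorm_add_single_of_eq_zero huk
    have hu0 : u 0 = 1 := by
      obtain ⟨d, -, hud, hbelow⟩ := (hu.resolve_left (by omega)).2
      rcases eq_or_ne d 0 with rfl | hd
      · exact hud
      · rw [hbelow 0 (Fin.pos_iff_ne_zero.2 hd), hx0]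
    have hk0 : k ≠ 0 := by
      rintro rfl
      exact zero_ne_one (huk.symm.trans hu0)
    simp [hk0.symm, hu0] at hv0
  · have := hammingNorm_add_single_of_eq_one huk
    omega

lemma hammingNorm_sub_one_le_card_closedNbhd_sdiff {x : Fin (n + 1) → ZMod 2}
    (hx : halesLT x (x + 1)) (h : hammingNorm (x + 1) = hammingNorm x) :
    hammingNorm x - 1 ≤ #(closedNbhd {x + 1} \ closedNbhd (initSeg (n + 1) (rank x))) := by
  have hx0 : x 0 = 1 := by
    obtain ⟨d, -, hxd, hbelow⟩ := (hx.resolve_left (by omega)).2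
    obtain rfl : d = 0 := by
      by_contra hd
      simpa using hbelow 0 (Fin.pos_iff_ne_zero.2 hd)
    exact hxd
  calc hammingNorm x - 1 = #(((supp x).erase 0).image fun j => x + 1 + Pi.single j 1) := by
        rw [card_image_of_injective _ (add_single_injective _), card_erase_of_mem (mem_supp.2 hx0),
          hammingNorm_eq_card_supp]
    _ ≤ _ := card_le_card fun v hv => ?_
  obtain ⟨j, hj, rfl⟩ := mem_image.1 hv
  rw [mem_erase, mem_supp] at hj
  have hj' : (x + 1 : Fin (n + 1) → ZMod 2) j = 0 := by rw [Pi.add_apply, hj.2]; rfl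
  refine mem_sdiff.2 ⟨by simp [closedNbhd_singleton], notMem_closedNbhd_initSeg hx0 ?_ ?_⟩
  · rw [Pi.add_apply, Pi.add_apply, Pi.single_eq_of_ne hj.1.symm, Pi.one_apply, hx0, add_zero]
    rfl
  · rw [hammingNorm_add_single_of_eq_zero hj', h]

lemma card_closedNbhd_insert_initSeg_le {x : Fin (n + 1) → ZMod 2} (hx : halesLT x (x + 1)) :
    #(closedNbhd (insert x (initSeg (n + 1) (rank x)))) ≤
      #(closedNbhd (insert (x + 1) (initSeg (n + 1) (rank x)))) := by
  rw [card_closedNbhd_insert, card_closedNbhd_insert, Nat.add_le_add_iff_right]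
  have hcompl := hammingNorm_add_one x
  have hle := hammingNorm_le_of_halesLT hx
  rcases eq_or_ne x 0 with rfl | hx0
  · have hI : initSeg (n + 1) (rank (0 : Fin (n + 1) → ZMod 2)) = ∅ :=
      eq_empty_of_forall_notMem fun y => by rw [mem_initSeg_rank]; exact not_halesLT_zero y
    rw [hI, closedNbhd_empty, sdiff_empty, sdiff_empty, card_closedNbhd_singleton,
      card_closedNbhd_singleton]
  have hpos : 0 < hammingNorm x := hammingNorm_pos_iff.2 hx0
  have hupper := (card_le_card (closedNbhd_singleton_sdiff_subset hx0)).trans card_image_le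
  by_cases hfirst : ∀ u, halesLT u x → hammingNorm u < hammingNorm x
  · have hJ : ∀ v ∈ closedNbhd (initSeg (n + 1) (rank x)), hammingNorm v ≤ hammingNorm x :=
      fun v hv => by
        have := hammingNorm_le_of_mem_closedNbhd (c := hammingNorm x - 1)
          (fun u hu => by have := hfirst u (mem_initSeg_rank.1 hu); omega) hv
        omega
    have := sub_le_card_closedNbhd_singleton_sdiff (z := x + 1) hJ (by omega)
    have := card_aboveSupp_add_hammingNorm_le x
    omega
  · push Not at hfirst
    obtain ⟨u, hux, hu⟩ := hfirst
    have hβ :=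
      card_aboveSupp_add_hammingNorm_lt hux (le_antisymm (hammingNorm_le_of_halesLT hux) hu)
    rcases hle.lt_or_eq with hlt | heq
    · have hJ :
          ∀ v ∈ closedNbhd (initSeg (n + 1) (rank x)), hammingNorm v ≤ hammingNorm x + 1 :=
        fun v hv => hammingNorm_le_of_mem_closedNbhd
          (fun u hu => hammingNorm_le_of_halesLT (mem_initSeg_rank.1 hu)) hv
      have := sub_le_card_closedNbhd_singleton_sdiff (z := x + 1) hJ (by omega)
      omega
    · have := hammingNorm_sub_one_le_card_closedNbhd_sdiff hx heq.symm
      omega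

end Antipodes

theorem card_closedNbhd_initSeg_le : ∀ {n : ℕ} (A : Finset (Fin n → ZMod 2)),
    #(closedNbhd (initSeg n #A)) ≤ #(closedNbhd A)
  | 0, A => by
    have hA : IsInitial A := fun x _ y hyx =>
      absurd (Subsingleton.elim y x ▸ hyx) (halesLT_irrefl x)
    rw [← hA.eq_initSeg]
  | n + 1, A => by
    induction hμ : ∑ x ∈ A, rank x using Nat.strong_induction_on generalizing A with
    | _ μ ih =>
    by_cases hcompressed : ∀ i, compress i A = A
    · by_cases hA : IsInitial A
      · rw [← hA.eq_initSeg]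
      obtain ⟨x, hx, rfl⟩ := exists_eq_insert_initSeg_of_compressed hcompressed hA
      rw [card_insert_of_notMem (by rw [mem_initSeg_rank]; exact halesLT_asymm hx),
        card_initSeg (rank_lt_card x).le, initSeg_rank_add_one]
      exact card_closedNbhd_insert_initSeg_le hx
    · push Not at hcompressed
      obtain ⟨i, hi⟩ := hcompressed
      calc #(closedNbhd (initSeg (n + 1) #A))
          = #(closedNbhd (initSeg (n + 1) #(compress i A))) := by rw [card_compress]
        _ ≤ #(closedNbhd (compress i A)) := ih _ (hμ ▸ sum_rank_compress_lt i hi) _ rfl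
        _ ≤ #(closedNbhd A) := card_closedNbhd_compress_le i card_closedNbhd_initSeg_le A

lemma halesInit_eq_initSeg (m a : ℕ) : halesInit m a = initSeg m a := by
  ext x
  have hrank : Nat.card {y : Fin m → ZMod 2 | halesLT y x} = rank x := by
    rw [Nat.card_coe_set_eq, rank, ← Set.ncard_coe_finset, coe_filter]
    simp
  simp only [halesInit, hrank, Set.mem_ofPred_eq, coe_filter, mem_univ, true_and, initSeg]

lemma outerBoundary_coe (A : Finset (Fin n → ZMod 2)) :
    outerBoundary (A : Set (Fin n → ZMod 2)) = ↑(closedNbhd A \ A) := by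
  ext v
  simp only [outerBoundary, Set.mem_ofPred_eq, coe_sdiff, Set.mem_sdiff, mem_coe, mem_closedNbhd]
  constructor
  · rintro ⟨hv, u, hu, huv⟩
    exact ⟨⟨u, hu, huv.le⟩, hv⟩
  · rintro ⟨⟨u, hu, huv⟩, hv⟩
    refine ⟨hv, u, hu, le_antisymm huv (Nat.one_le_iff_ne_zero.2 fun h => ?_)⟩
    exact hv (hammingDist_eq_zero.1 h ▸ hu)

lemma card_outerBoundary_coe (A : Finset (Fin n → ZMod 2)) :
    Nat.card (outerBoundary (A : Set (Fin n → ZMod 2))) = #(closedNbhd A) - #A := by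
  rw [outerBoundary_coe, Nat.card_coe_set_eq, Set.ncard_coe_finset,
    card_sdiff_of_subset subset_closedNbhd]

end BooleanCube

theorem stmt_13 (m : ℕ) (A : Set (Fin m → ZMod 2)) :
    Nat.card (outerBoundary (halesInit m (Nat.card A))) ≤ Nat.card (outerBoundary A) := by
  classical
  obtain ⟨B, rfl⟩ : ∃ B : Finset (Fin m → ZMod 2), ↑B = A :=
    ⟨A.toFinset, A.coe_toFinset⟩
  rw [Nat.card_coe_set_eq (B : Set (Fin m → ZMod 2)), Set.ncard_coe_finset,
    BooleanCube.halesInit_eq_initSeg,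
    BooleanCube.card_outerBoundary_coe, BooleanCube.card_outerBoundary_coe,
    BooleanCube.card_initSeg (card_le_univ B)]
  exact Nat.sub_le_sub_right (BooleanCube.card_closedNbhd_initSeg_le B) _
end

section
/- Let m ≥ 5 and let a satisfy V(m, r) ≤ a ≤ V(m, ⌊(m−1)/2⌋) for some r ≤ ⌊(m−1)/2⌋ − 1. Then the outer vertex boundary of the initial segment I_a^m of Hales order in the m-cube satisfies |Γ' I_a^m| ≥ C(m, r+1). -/
/-!
Pick `t ≥ r` with `V(m, t) ≤ a ≤ V(m, t + 1)`. The tie-breaking rule of Hales order plays no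
role: `I_a^m` contains every vector of weight `≤ t` and none of weight `≥ t + 2`.
Its outer boundary therefore contains the weight-`(t + 1)` vectors outside `I_a^m` (each has a
neighbour of weight `t`) together with the upper shadow of the weight-`(t + 1)` vectors inside
`I_a^m`. Since `2 (t + 1) < m`, the local LYM inequality makes that shadow at least as large as
the set it comes from, so the boundary has at least `C(m, t + 1) ≥ C(m, r + 1)` elements.
-/

open Finset

open scoped FinsetFamily symmDiff

theorem Nat.choose_le_choose_of_le_half {n i j : ℕ} (hij : i ≤ j) (hj : 2 * j ≤ n) :
    n.choose i ≤ n.choose j := by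
  induction j, hij using Nat.le_induction with
  | base => exact le_rfl
  | succ j _ ih => exact (ih (by omega)).trans (Nat.choose_le_succ_of_lt_half_left (by omega))

theorem Nat.exists_le_apply_and_le_apply_succ {β : Type*} [LinearOrder β] (f : ℕ → β) {a : β}
    {r k : ℕ} (hrk : r < k) (hr : f r ≤ a) (hk : a ≤ f k) :
    ∃ t, r ≤ t ∧ t < k ∧ f t ≤ a ∧ a ≤ f (t + 1) := by
  induction k, hrk using Nat.le_induction with
  | base => exact ⟨r, le_rfl, Nat.lt_succ_self r, hr, hk⟩
  | succ k hrk ih =>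
    rcases le_or_gt a (f k) with hak | hka
    · obtain ⟨t, hrt, htk, h⟩ := ih hak
      exact ⟨t, hrt, htk.trans (Nat.lt_succ_self k), h⟩
    · exact ⟨k, by omega, Nat.lt_succ_self k, hka.le, hk⟩

namespace Finset

variable {α : Type*} [DecidableEq α] [Fintype α]

def vertexBoundary (𝒜 : Finset (Finset α)) : Finset (Finset α) :=
  {B | B ∉ 𝒜 ∧ ∃ A ∈ 𝒜, #(A ∆ B) = 1}

/-- Local LYM applied to the complements. -/
theorem card_le_card_upShadow {𝒜 : Finset (Finset α)} {r : ℕ}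
    (h𝒜 : (𝒜 : Set (Finset α)).Sized r) (hr : 2 * r < Fintype.card α) : #𝒜 ≤ #(∂⁺ 𝒜) := by
  have h := card_mul_le_card_shadow_mul h𝒜.compls
  rw [shadow_compls, card_compls, card_compls,
    Nat.sub_sub_self (by omega : r ≤ Fintype.card α)] at h
  exact Nat.le_of_mul_le_mul_right ((Nat.mul_le_mul_left _ (by omega)).trans h) r.succ_pos

theorem choose_le_card_vertexBoundary {𝒜 : Finset (Finset α)} {t : ℕ}
    (hsmall : ∀ A : Finset α, #A ≤ t → A ∈ 𝒜) (hlarge : ∀ A ∈ 𝒜, #A ≤ t + 1)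
    (ht : 2 * t + 3 ≤ Fintype.card α) :
    (Fintype.card α).choose (t + 1) ≤ #(vertexBoundary 𝒜) := by
  set ℒ := powersetCard (t + 1) (univ : Finset α)
  have hmissing : ℒ \ 𝒜 ⊆ vertexBoundary 𝒜 := by
    intro B hB
    obtain ⟨hBℒ, hB𝒜⟩ := mem_sdiff.1 hB
    rw [mem_powersetCard_univ] at hBℒ
    obtain ⟨i, hi⟩ := card_pos.1 (by omega : 0 < #B)
    refine mem_filter.2 ⟨mem_univ _, hB𝒜, B.erase i, hsmall _ ?_, ?_⟩
    · rw [card_erase_of_mem hi]; omega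
    · rw [symmDiff_of_le (erase_subset i B), sdiff_erase_self hi, card_singleton]
  have hshadow : ∂⁺ (𝒜 # (t + 1)) ⊆ vertexBoundary 𝒜 := by
    intro B hB
    obtain ⟨A, hA, hAB, hBA⟩ := mem_upShadow_iff_exists_sdiff.1 hB
    obtain ⟨hA𝒜, hAcard⟩ := mem_slice.1 hA
    refine mem_filter.2 ⟨mem_univ _, fun hB𝒜 => ?_, A, hA𝒜, ?_⟩
    · have := hlarge B hB𝒜
      have := card_sdiff_of_subset hAB
      omega
    · rwa [symmDiff_of_le hAB]
  have hdisj : Disjoint (ℒ \ 𝒜) (∂⁺ (𝒜 # (t + 1))) := by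
    rw [disjoint_left]
    intro B hB hB'
    have h1 := mem_powersetCard_univ.1 (mem_sdiff.1 hB).1
    have h2 := (sized_slice (𝒜 := 𝒜) (r := t + 1)).upShadow hB'
    omega
  have hsplit : #(ℒ \ 𝒜) + #(𝒜 # (t + 1)) = (Fintype.card α).choose (t + 1) := by
    have : 𝒜 # (t + 1) = ℒ ∩ 𝒜 := by
      ext A; simp [ℒ, mem_slice, and_comm]
    rw [this, card_sdiff_add_card_inter, card_powersetCard, card_univ]
  calc (Fintype.card α).choose (t + 1)
      = #(ℒ \ 𝒜) + #(𝒜 # (t + 1)) := hsplit.symm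
    _ ≤ #(ℒ \ 𝒜) + #(∂⁺ (𝒜 # (t + 1))) :=
        Nat.add_le_add_left (card_le_card_upShadow sized_slice (by omega)) _
    _ = #(ℒ \ 𝒜 ∪ ∂⁺ (𝒜 # (t + 1))) := (card_union_of_disjoint hdisj).symm
    _ ≤ #(vertexBoundary 𝒜) := card_le_card (union_subset hmissing hshadow)

end Finset

variable {ι : Type*} [Fintype ι] [DecidableEq ι]

def supportEquiv : (ι → ZMod 2) ≃ Finset ι where
  toFun x := {i | x i ≠ 0}
  invFun A i := if i ∈ A then 1 else 0
  left_inv x := by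
    funext i
    simp only [mem_filter, mem_univ, true_and]
    generalize x i = p
    revert p
    decide
  right_inv A := by ext i; by_cases h : i ∈ A <;> simp [h]

theorem hammingNorm_eq_card_supportEquiv (x : ι → ZMod 2) :
    hammingNorm x = #(supportEquiv x) := rfl

theorem hammingDist_eq_card_symmDiff_supportEquiv (u v : ι → ZMod 2) :
    hammingDist u v = #(supportEquiv u ∆ supportEquiv v) := by
  unfold hammingDist
  congr 1
  ext i
  simp only [supportEquiv, Equiv.coe_fn_mk, mem_filter, mem_univ, true_and, mem_symmDiff]
  generalize u i = p, v i = q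
  revert p q
  decide

theorem card_filter_hammingNorm_eq (w : ℕ) :
    #{x : ι → ZMod 2 | hammingNorm x = w} = (Fintype.card ι).choose w := by
  rw [card_equiv supportEquiv (t := powersetCard w univ) fun x => by
    rw [mem_filter, mem_powersetCard_univ]; simp [hammingNorm_eq_card_supportEquiv]]
  rw [card_powersetCard, card_univ]

theorem card_filter_hammingNorm_lt (w : ℕ) :
    #{x : ι → ZMod 2 | hammingNorm x < w} = ∑ i ∈ range w, (Fintype.card ι).choose i := by
  rw [card_eq_sum_card_fiberwise (f := hammingNorm) (t := range w) (fun x hx => by simpa using hx)]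
  refine sum_congr rfl fun i hi => ?_
  rw [filter_filter, ← card_filter_hammingNorm_eq]
  exact congrArg card (filter_congr fun x _ => and_iff_right_of_imp fun h => h ▸ mem_range.1 hi)

section HalesOrder

open scoped Classical

variable {m : ℕ}

theorem halesLT.hammingNorm_le {x y : Fin m → ZMod 2} (h : halesLT y x) :
    hammingNorm y ≤ hammingNorm x := by
  rcases h with h | ⟨h, -⟩ <;> omega

theorem halesLT_irrefl (x : Fin m → ZMod 2) : ¬halesLT x x := by
  rintro (h | ⟨-, i, h, -⟩)
  exacts [lt_irrefl _ h, h rfl]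

theorem mem_halesInit_iff_card_lt {a : ℕ} {x : Fin m → ZMod 2} :
    x ∈ halesInit m a ↔ #{y | halesLT y x} < a := by
  change Nat.card {y | halesLT y x} < a ↔ _
  rw [Nat.card_eq_card_toFinset, Set.toFinset_ofPred]

theorem mem_halesInit_of_sum_le {a : ℕ} {x : Fin m → ZMod 2}
    (h : ∑ i ∈ range (hammingNorm x + 1), m.choose i ≤ a) : x ∈ halesInit m a := by
  have hsub : ({y | halesLT y x} : Finset (Fin m → ZMod 2)) ⊂
      ({y | hammingNorm y < hammingNorm x + 1} : Finset (Fin m → ZMod 2)) :=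
    (ssubset_iff_of_subset (monotone_filter_right _ fun _ _ h =>
      Nat.lt_succ_of_le h.hammingNorm_le)).2 ⟨x, by simp, by simp [halesLT_irrefl]⟩
  have := card_lt_card hsub
  rw [card_filter_hammingNorm_lt, Fintype.card_fin] at this
  exact mem_halesInit_iff_card_lt.2 (by omega)

theorem notMem_halesInit_of_le_sum {a : ℕ} {x : Fin m → ZMod 2}
    (h : a ≤ ∑ i ∈ range (hammingNorm x), m.choose i) : x ∉ halesInit m a := by
  have hsub : ({y | hammingNorm y < hammingNorm x} : Finset (Fin m → ZMod 2)) ⊆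
      ({y | halesLT y x} : Finset (Fin m → ZMod 2)) :=
    monotone_filter_right _ fun _ _ => Or.inl
  have := card_le_card hsub
  rw [card_filter_hammingNorm_lt, Fintype.card_fin] at this
  rw [mem_halesInit_iff_card_lt]
  omega

theorem card_outerBoundary_eq_card_vertexBoundary (A : Set (Fin m → ZMod 2)) :
    Nat.card (outerBoundary A) = #(vertexBoundary {B | supportEquiv.symm B ∈ A}) := by
  rw [← Nat.card_eq_finsetCard]
  refine Nat.card_congr (supportEquiv.subtypeEquiv fun v => ?_)
  simp only [outerBoundary, vertexBoundary, Set.mem_ofPred_eq, mem_filter, mem_univ, true_and,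
    Equiv.symm_apply_apply, hammingDist_eq_card_symmDiff_supportEquiv]
  refine and_congr_right fun _ => ⟨fun ⟨u, hu, h⟩ => ⟨supportEquiv u, by simpa using hu, h⟩,
    fun ⟨B, hB, h⟩ => ⟨supportEquiv.symm B, hB, by simpa using h⟩⟩

theorem choose_le_card_outerBoundary_halesInit {a t : ℕ}
    (h₁ : ∑ i ∈ range (t + 1), m.choose i ≤ a) (h₂ : a ≤ ∑ i ∈ range (t + 2), m.choose i)
    (hm : 2 * t + 3 ≤ m) : m.choose (t + 1) ≤ Nat.card (outerBoundary (halesInit m a)) := by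
  rw [card_outerBoundary_eq_card_vertexBoundary]
  have hV : ∀ {k l}, k ≤ l → ∑ i ∈ range k, m.choose i ≤ ∑ i ∈ range l, m.choose i :=
    fun hkl => sum_le_sum_of_subset (range_subset_range.2 hkl)
  set 𝒜 : Finset (Finset (Fin m)) := {B | supportEquiv.symm B ∈ halesInit m a}
  have hsmall : ∀ A : Finset (Fin m), #A ≤ t → A ∈ 𝒜 := fun A hA => by
    refine mem_filter.2 ⟨mem_univ _, mem_halesInit_of_sum_le ?_⟩
    rw [hammingNorm_eq_card_supportEquiv, Equiv.apply_symm_apply]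
    exact (hV (by omega)).trans h₁
  have hlarge : ∀ A ∈ 𝒜, #A ≤ t + 1 := fun A hA => by
    by_contra! hA'
    refine notMem_halesInit_of_le_sum ?_ (mem_filter.1 hA).2
    rw [hammingNorm_eq_card_supportEquiv, Equiv.apply_symm_apply]
    exact h₂.trans (hV (by omega))
  simpa using choose_le_card_vertexBoundary hsmall hlarge (by simpa using hm)

end HalesOrder

theorem stmt_14 (m a r : ℕ) (hm : 5 ≤ m) (hr : r ≤ (m - 1) / 2 - 1)
    (ha₁ : ∑ i ∈ Finset.range (r + 1), m.choose i ≤ a)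
    (ha₂ : a ≤ ∑ i ∈ Finset.range ((m - 1) / 2 + 1), m.choose i) :
    m.choose (r + 1) ≤ Nat.card (outerBoundary (halesInit m a)) := by
  obtain ⟨t, hrt, htk, h₁, h₂⟩ := Nat.exists_le_apply_and_le_apply_succ
    (fun s => ∑ i ∈ range (s + 1), m.choose i) (by omega : r < (m - 1) / 2) ha₁ ha₂
  calc m.choose (r + 1) ≤ m.choose (t + 1) := Nat.choose_le_choose_of_le_half (by omega) (by omega)
    _ ≤ Nat.card (outerBoundary (halesInit m a)) :=
      choose_le_card_outerBoundary_halesInit h₁ h₂ (by omega)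
end

section
/- For all M ≥ m and all a ≤ 2^m, the outer vertex boundary of the Hales-order initial segment of size a in the M-dimensional cube is at least that in the m-dimensional cube: |Γ' I_a^m| ≤ |Γ' I_a^M|. -/
/-!
Write `g n t` (`initSegNbhdCard n t`) for the size of the closed neighbourhood of the first `t`
vertices of the cube `{0,1}ⁿ` in Hales order. The outer boundary of this initial segment has
`g n t - min t 2ⁿ` elements, so it suffices to show that `g n t ≤ g (n + 1) t`.

The tool is Harper's theorem: every set of `t` vertices has a closed neighbourhood with at least
`g n t` elements. It is proved by induction on `n` and compression. Replacing the two `i`-slices of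
a set by initial segments of `{0,1}ⁿ⁻¹` of the same sizes keeps its size, does not enlarge its
neighbourhood (by Harper's theorem in dimension `n - 1`, as neighbourhoods of initial segments are
initial segments) and strictly lowers the sum of the ranks of its elements unless both slices were
already initial. A set all of whose slices are initial segments is either an initial segment or
consists of the vertices up to some `w` except its complement `w + 1`; in the latter case its
neighbourhood is checked to contain that of the first `rank w` vertices.

Complementation reverses the Hales order, so Harper's theorem for the union of the first `a` and
the last `b` vertices shows that `g n` is subadditive. Splitting the first `t` vertices of
`{0,1}ⁿ⁺¹` into its two slices along a coordinate, of sizes `s₀ + s₁ = t`, finally gives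
`g (n + 1) t ≥ g n s₀ + g n s₁ ≥ g n t`.
-/

open Finset Function

section InitialSegment

variable {α : Type*} {r : α → α → Prop}

variable (r) in
def IsDownClosed (s : Finset α) : Prop := ∀ ⦃x⦄, x ∈ s → ∀ ⦃y⦄, r y x → y ∈ s

lemma exists_card_eq_sum_lt_of_not_isDownClosed {f : α → ℕ} (hf : ∀ ⦃x y⦄, r x y → f x < f y)
    {s : Finset α} (hs : ¬ IsDownClosed r s) :
    ∃ t : Finset α, #t = #s ∧ ∑ x ∈ t, f x < ∑ x ∈ s, f x := by
  classical
  obtain ⟨x, hx, y, hyx, hy⟩ : ∃ x ∈ s, ∃ y, r y x ∧ y ∉ s := by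
    simpa [IsDownClosed] using hs
  have hy' : y ∉ s.erase x := fun h => hy (mem_of_mem_erase h)
  refine ⟨insert y (s.erase x), by rw [card_insert_of_notMem hy', card_erase_add_one hx], ?_⟩
  rw [sum_insert hy', ← add_sum_erase s f hx]
  exact Nat.add_lt_add_right (hf hyx) _

lemma isDownClosed_of_subsingleton [Subsingleton α] [Std.Irrefl r] (s : Finset α) :
    IsDownClosed r s :=
  fun x _ y hyx => absurd hyx (Subsingleton.elim x y ▸ irrefl x)

variable [Fintype α] [DecidableRel r]

variable (r) in
def rank (x : α) : ℕ := #{y | r y x}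

variable (r) in
def initSeg (t : ℕ) : Finset α := {x | rank r x < t}

@[simp] lemma mem_initSeg {t : ℕ} {x : α} : x ∈ initSeg r t ↔ rank r x < t := by simp [initSeg]

lemma initSeg_subset_initSeg {s t : ℕ} (h : s ≤ t) : initSeg r s ⊆ initSeg r t := fun x hx => by
  simp only [mem_initSeg] at hx ⊢; omega

variable [IsStrictTotalOrder α r]

lemma rank_lt_rank {x y : α} (h : r x y) : rank r x < rank r y :=
  card_lt_card <| ssubset_iff_of_subset (fun z hz => by simp at hz ⊢; exact _root_.trans hz h)
    |>.2 ⟨x, by simpa using h, by simpa using irrefl x⟩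

lemma rank_lt_rank_iff {x y : α} : rank r x < rank r y ↔ r x y := by
  refine ⟨fun h => ?_, rank_lt_rank⟩
  rcases trichotomous_of r x y with hxy | rfl | hyx
  · exact hxy
  · exact absurd h (lt_irrefl _)
  · exact absurd h (rank_lt_rank hyx).not_gt

lemma rank_injective : Injective (rank r) := fun x y h => by
  rcases trichotomous_of r x y with hxy | rfl | hyx
  · exact absurd h (rank_lt_rank hxy).ne
  · rfl
  · exact absurd h (rank_lt_rank hyx).ne'

lemma rank_lt_card (x : α) : rank r x < Fintype.card α :=
  card_lt_univ_of_notMem (x := x) (by simpa using irrefl x)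

lemma card_initSeg (t : ℕ) : #(initSeg r t) = min t (Fintype.card α) := by
  have himage : univ.image (rank r) = range (Fintype.card α) :=
    eq_of_subset_of_card_le (fun k => by simpa using fun x hx => hx ▸ rank_lt_card (r := r) x)
      (by simp [card_image_of_injective _ (rank_injective (r := r))])
  rw [← card_range (min t _), ← card_image_of_injective _ (rank_injective (r := r)), initSeg,
    ← filter_image (p := (· < t)), himage]
  congr 1; ext k; simp; omega

lemma card_initSeg_card (s : Finset α) : #(initSeg r #s) = #s := by
  rw [card_initSeg, min_eq_left (card_le_univ s)]

lemma initSeg_min_card (t : ℕ) : initSeg r (min t (Fintype.card α)) = initSeg r t := by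
  ext x; simpa using fun _ => rank_lt_card x

lemma mem_initSeg_rank_add_one {x y : α} : y ∈ initSeg r (rank r x + 1) ↔ ¬ r x y := by
  rw [mem_initSeg, Nat.lt_add_one_iff, ← not_lt, rank_lt_rank_iff]

lemma isDownClosed_initSeg (t : ℕ) : IsDownClosed r (initSeg r t) := fun _ hx _ hyx => by
  simp only [mem_initSeg] at hx ⊢; exact (rank_lt_rank hyx).trans hx

lemma IsDownClosed.eq_initSeg {s : Finset α} (hs : IsDownClosed r s) : s = initSeg r #s := by
  ext x
  rw [mem_initSeg]
  constructor
  · intro hx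
    refine card_lt_card <| ssubset_iff_of_subset (fun y hy => hs hx (by simpa using hy)) |>.2
      ⟨x, hx, by simpa using irrefl x⟩
  · intro hx
    by_contra hxs
    have : s ⊆ ({y | r y x} : Finset α) := fun y hy => by
      rcases trichotomous_of r y x with h | rfl | h
      · simpa using h
      · exact absurd hy hxs
      · exact absurd (hs hy h) hxs
    exact (card_le_card this).not_gt hx

lemma IsDownClosed.card_union [DecidableEq α] {s t : Finset α} (hs : IsDownClosed r s)
    (ht : IsDownClosed r t) : #(s ∪ t) = max #s #t := by
  rcases le_total #s #t with h | h
  · rw [union_eq_right.2 (hs.eq_initSeg ▸ ht.eq_initSeg ▸ initSeg_subset_initSeg h), max_eq_right h]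
  · rw [union_eq_left.2 (ht.eq_initSeg ▸ hs.eq_initSeg ▸ initSeg_subset_initSeg h), max_eq_left h]

lemma sum_initSeg_card_le {f : α → ℕ} (hf : ∀ ⦃x y⦄, r x y → f x < f y) (s : Finset α) :
    ∑ x ∈ initSeg r #s, f x ≤ ∑ x ∈ s, f x := by
  induction h : ∑ x ∈ s, f x using Nat.strong_induction_on generalizing s with
  | _ k ih =>
    by_cases hs : IsDownClosed r s
    · rw [← hs.eq_initSeg, h]
    · obtain ⟨t, ht, hlt⟩ := exists_card_eq_sum_lt_of_not_isDownClosed hf hs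
      rw [← ht]
      exact (ih _ (h ▸ hlt) t rfl).trans (h ▸ hlt).le

lemma sum_initSeg_card_lt {f : α → ℕ} (hf : ∀ ⦃x y⦄, r x y → f x < f y) {s : Finset α}
    (hs : ¬ IsDownClosed r s) : ∑ x ∈ initSeg r #s, f x < ∑ x ∈ s, f x := by
  obtain ⟨t, ht, hlt⟩ := exists_card_eq_sum_lt_of_not_isDownClosed hf hs
  exact ht ▸ (sum_initSeg_card_le hf t).trans_lt hlt

lemma rank_add_card_gt (x : α) : rank r x + #{y | r x y} + 1 = Fintype.card α := by
  classical
  have hnot : ({y | ¬ r y x} : Finset α) = insert x ({y | r x y} : Finset α) := by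
    ext y
    simp only [mem_filter, mem_univ, true_and, mem_insert]
    rcases trichotomous_of r x y with h | rfl | h
    · exact iff_of_true (asymm h) (Or.inr h)
    · exact iff_of_true (irrefl _) (Or.inl rfl)
    · exact iff_of_false (not_not.2 h) (by rintro (rfl | h'); exacts [irrefl _ h, asymm h h'])
  rw [add_assoc, ← card_insert_of_notMem (s := ({y | r x y} : Finset α)) (by simpa using irrefl x),
    ← hnot, rank, card_filter_add_card_filter_not, card_univ]

lemma rank_apply_add_rank {φ : α → α} (hφ : Involutive φ) (hr : ∀ ⦃x y⦄, r x y → r (φ y) (φ x))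
    (x : α) : rank r (φ x) + rank r x + 1 = Fintype.card α := by
  have : rank r (φ x) = #{y | r x y} :=
    card_nbij' φ φ (fun y hy => by simpa [hφ x] using hr (mem_filter.1 hy).2)
      (fun y hy => by simpa using hr (mem_filter.1 hy).2) (fun y _ => hφ y) (fun y _ => hφ y)
  rw [this, add_comm (#_), rank_add_card_gt x]

end InitialSegment

section Hamming

variable {ι β : Type*} [Fintype ι] [DecidableEq ι] [DecidableEq β]

lemma hammingDist_update_le (x : ι → β) (i : ι) (a : β) : hammingDist x (update x i a) ≤ 1 :=
  (card_le_card (t := {i}) fun j => by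
    simp +contextual [update_apply, eq_comm (a := j)]).trans (card_singleton i).le

lemma exists_eq_update_of_hammingDist_eq_one {u x : ι → β} (h : hammingDist u x = 1) :
    ∃ i, u i ≠ x i ∧ x = update u i (x i) := by
  obtain ⟨i, hi⟩ := card_eq_one.1 h
  have hdiff : ∀ j, u j ≠ x j ↔ j = i := fun j => by
    simpa using congrArg (j ∈ ·) hi
  refine ⟨i, (hdiff i).2 rfl, funext fun j => ?_⟩
  by_cases hj : j = i
  · subst hj; simp
  · simpa [hj] using (not_congr (hdiff j)).2 hj |> not_not.1 |>.symm

lemma hammingNorm_update_of_eq_zero [Zero β] {x : ι → β} {i : ι} {a : β} (hx : x i = 0)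
    (ha : a ≠ 0) : hammingNorm (update x i a) = hammingNorm x + 1 := by
  have : ({j | update x i a j ≠ 0} : Finset ι) = insert i ({j | x j ≠ 0} : Finset ι) := by
    ext j; by_cases hj : j = i <;> simp [hj, hx, ha]
  rw [hammingNorm, this, card_insert_of_notMem (by simp [hx]), hammingNorm]

lemma hammingDist_insertNth {m : ℕ} (i : Fin (m + 1)) (a b : β) (z z' : Fin m → β) :
    hammingDist (i.insertNth (α := fun _ ↦ β) a z) (i.insertNth b z') =
      hammingDist z z' + if a = b then 0 else 1 := by
  simp only [hammingDist, card_filter, Fin.sum_univ_succAbove _ i, Fin.insertNth_apply_same,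
    Fin.insertNth_apply_succAbove, add_comm (ite _ _ _), ite_not]

lemma hammingNorm_insertNth [Zero β] {m : ℕ} (i : Fin (m + 1)) (a : β) (z : Fin m → β) :
    hammingNorm (i.insertNth (α := fun _ ↦ β) a z) = hammingNorm z + if a = 0 then 0 else 1 := by
  simpa [Fin.insertNth_zero_right] using hammingDist_insertNth i a 0 z 0

end Hamming

lemma zmod_two_eq_add_one_of_ne {a b : ZMod 2} (h : a ≠ b) : a = b + 1 := by
  decide +revert

lemma zmod_two_eq_zero_of_ne {a b : ZMod 2} (h : a ≠ b) (hb : b ≠ 0) : a = 0 := by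
  decide +revert

abbrev Cube (n : ℕ) := Fin n → ZMod 2

namespace Cube

variable {n : ℕ}

lemma halesLT_iff {x y : Cube n} : halesLT x y ↔ hammingNorm x < hammingNorm y ∨
    hammingNorm x = hammingNorm y ∧ ∃ i, (∀ j < i, x j = y j) ∧ x i ≠ 0 ∧ y i = 0 := by
  have h : ∀ a b : ZMod 2, a ≠ b ∧ a = 1 ↔ a ≠ 0 ∧ b = 0 := by decide
  simp only [halesLT, ← and_assoc, h, and_comm (a := ∀ j < _, _)]

/-- The Hales order is the lexicographic order on (weight, coordinates), with `1` before `0`. -/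
def halesKey (x : Cube n) : Lex (ℕ × Lex (Fin n → ℕᵒᵈ)) :=
  toLex (hammingNorm x, toLex fun i => OrderDual.toDual (x i).val)

lemma halesKey_injective : Injective (halesKey (n := n)) := fun x y h => by
  simp only [halesKey, toLex_inj, Prod.mk.injEq] at h
  exact funext fun i => ZMod.val_injective 2 (congrFun h.2 i)

lemma halesLT_iff_halesKey_lt {x y : Cube n} : halesLT x y ↔ halesKey x < halesKey y := by
  have h : ∀ a b : ZMod 2, a ≠ 0 ∧ b = 0 ↔ b.val < a.val := by decide
  rw [halesLT_iff, halesKey, halesKey, Prod.Lex.toLex_lt_toLex]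
  refine or_congr Iff.rfl (and_congr Iff.rfl (exists_congr fun i => ?_))
  simp only [Pi.toLex_apply, OrderDual.toDual_lt_toDual, OrderDual.toDual_inj,
    (ZMod.val_injective 2).eq_iff, h]

instance : IsStrictTotalOrder (Cube n) halesLT where
  irrefl x := by simp [halesLT_iff_halesKey_lt]
  trans x y z := by simpa only [halesLT_iff_halesKey_lt] using lt_trans
  trichotomous x y hxy hyx := halesKey_injective <|
    le_antisymm (not_lt.1 (halesLT_iff_halesKey_lt.not.1 hyx))
      (not_lt.1 (halesLT_iff_halesKey_lt.not.1 hxy))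

instance : DecidableRel (halesLT (m := n)) := fun _ _ => by unfold halesLT; infer_instance

lemma halesLT_insertNth_iff (i : Fin (n + 1)) (b : ZMod 2) {z z' : Cube n} :
    halesLT (i.insertNth b z) (i.insertNth b z') ↔ halesLT z z' := by
  have hbelow (k : Fin n) : (∀ j < i.succAbove k,
      i.insertNth (α := fun _ ↦ ZMod 2) b z j = i.insertNth (α := fun _ ↦ ZMod 2) b z' j) ↔
      ∀ j < k, z j = z' j := by
    rw [Fin.forall_iff_succAbove i]
    simp [Fin.succAbove_lt_succAbove_iff]
  have hb : ¬ (b ≠ 0 ∧ b = 0) := fun h => h.1 h.2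
  simp only [halesLT_iff, hammingNorm_insertNth, add_lt_add_iff_right, add_left_inj,
    Fin.exists_iff_succAbove i, Fin.insertNth_apply_same, Fin.insertNth_apply_succAbove, hbelow,
    hb, and_false, false_or]

lemma card_cube : Fintype.card (Cube n) = 2 ^ n := by simp

lemma hammingNorm_le_of_halesLT {x y : Cube n} (h : halesLT x y) :
    hammingNorm x ≤ hammingNorm y := by
  rcases h with h | ⟨h, -⟩ <;> omega

lemma halesLT_of_hammingNorm_lt {x y : Cube n} (h : hammingNorm x < hammingNorm y) :
    halesLT x y :=
  Or.inl h

lemma hammingNorm_update_zero_add_one {x : Cube n} {i : Fin n} (hx : x i ≠ 0) :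
    hammingNorm (update x i 0) + 1 = hammingNorm x := by
  simpa using (hammingNorm_update_of_eq_zero (update_self i 0 x) hx).symm

lemma eq_of_support_subset {x y : Cube n} (h : ∀ k, x k ≠ 0 → y k ≠ 0)
    (hw : hammingNorm y ≤ hammingNorm x) : x = y := by
  have hsupp := eq_of_subset_of_card_le (s := {k | x k ≠ 0}) (t := {k | y k ≠ 0})
    (fun k => by simpa using h k) hw
  have hval : ∀ a b : ZMod 2, (a ≠ 0 ↔ b ≠ 0) → a = b := by decide
  exact funext fun k => hval _ _ (by simpa using congrArg (k ∈ ·) hsupp)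

section ClosedNbhd

def closedNbhd (A : Finset (Cube n)) : Finset (Cube n) := {x | ∃ u ∈ A, hammingDist u x ≤ 1}

variable {A B : Finset (Cube n)}

lemma mem_closedNbhd {x : Cube n} : x ∈ closedNbhd A ↔ ∃ u ∈ A, hammingDist u x ≤ 1 := by
  simp [closedNbhd]

lemma subset_closedNbhd (A : Finset (Cube n)) : A ⊆ closedNbhd A :=
  fun x hx => mem_closedNbhd.2 ⟨x, hx, by simp⟩

lemma closedNbhd_union : closedNbhd (A ∪ B) = closedNbhd A ∪ closedNbhd B := by
  ext x; simp only [mem_closedNbhd, mem_union, or_and_right, exists_or]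

end ClosedNbhd

lemma halesLT_or_eq_update_zero {x y : Cube n} (hyx : halesLT y x)
    (hw : hammingNorm y = hammingNorm x) {i j : Fin n} (hi : x i ≠ 0) (hj : y j ≠ 0)
    (hjmax : ∀ k, y k ≠ 0 → k ≤ j) :
    halesLT (update y j 0) (update x i 0) ∨ update y j 0 = update x i 0 := by
  obtain ⟨p, hbelow, hyp, hxp⟩ : ∃ p, (∀ k < p, y k = x k) ∧ y p ≠ 0 ∧ x p = 0 := by
    simpa [hw] using halesLT_iff.1 hyx
  have hpj : p ≤ j := hjmax p hyp
  have hip : i ≠ p := by rintro rfl; exact hi hxp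
  have hweq : hammingNorm (update y j 0) = hammingNorm (update x i 0) := by
    have := hammingNorm_update_zero_add_one hj
    have := hammingNorm_update_zero_add_one hi
    omega
  rcases lt_or_gt_of_ne hip with hip | hpi
  · refine Or.inl (halesLT_iff.2 (Or.inr ⟨hweq, i, fun k hk => ?_, ?_, by simp⟩))
    · rw [update_of_ne (hk.trans (hip.trans_le hpj)).ne, update_of_ne hk.ne,
        hbelow k (hk.trans hip)]
    · rwa [update_of_ne (hip.trans_le hpj).ne, hbelow i hip]
  rcases hpj.lt_or_eq with hpj | rfl
  · refine Or.inl (halesLT_iff.2 (Or.inr ⟨hweq, p, fun k hk => ?_, ?_, ?_⟩))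
    · rw [update_of_ne (hk.trans hpj).ne, update_of_ne (hk.trans hpi).ne, hbelow k hk]
    · rwa [update_of_ne hpj.ne]
    · rwa [update_of_ne hpi.ne]
  · refine Or.inr (eq_of_support_subset (fun k hk => ?_) hweq.ge)
    have hkp : k ≠ p := by rintro rfl; simp at hk
    rw [update_of_ne hkp] at hk
    have hkp' : k < p := (hjmax k hk).lt_of_ne hkp
    rwa [update_of_ne (hkp'.trans hpi).ne, ← hbelow k hkp']

lemma _root_.IsDownClosed.exists_eq_update_zero {D : Finset (Cube n)} (hD : IsDownClosed halesLT D)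
    {u x : Cube n} (hu : u ∈ D) (hx : x ∉ D) (hux : hammingDist u x ≤ 1) :
    ∃ i, x i ≠ 0 ∧ u = update x i 0 := by
  have hne : u ≠ x := ne_of_mem_of_not_mem hu hx
  obtain ⟨i, hi, hxu⟩ :=
    exists_eq_update_of_hammingDist_eq_one (le_antisymm hux (hammingDist_pos.2 hne))
  have hlt : halesLT u x :=
    (trichotomous_of halesLT u x).resolve_right (not_or.2 ⟨hne, fun h => hx (hD hu h)⟩)
  have hxi : x i ≠ 0 := by
    intro hxi
    have := hammingNorm_update_zero_add_one (hxi ▸ hi)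
    rw [← hxi, ← hxu] at this
    have := hammingNorm_le_of_halesLT hlt
    omega
  have hui : u i = 0 := zmod_two_eq_zero_of_ne hi hxi
  refine ⟨i, hxi, ?_⟩
  rw [← hui, hxu, update_idem, update_eq_self]

lemma _root_.IsDownClosed.closedNbhd {D : Finset (Cube n)} (hD : IsDownClosed halesLT D) :
    IsDownClosed halesLT (closedNbhd D) := by
  intro x hx y hyx
  obtain ⟨u, hu, hux⟩ := mem_closedNbhd.1 hx
  by_cases hyD : y ∈ D
  · exact subset_closedNbhd D hyD
  have hxD : x ∉ D := fun h => hyD (hD h hyx)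
  obtain ⟨i, hxi, rfl⟩ := hD.exists_eq_update_zero hu hxD hux
  have hy0 : y ≠ 0 := by
    rintro rfl
    have hu0 : update x i 0 ≠ 0 := fun h => hyD (h ▸ hu)
    exact hyD (hD hu (halesLT_of_hammingNorm_lt (by simpa [hammingNorm_pos_iff] using hu0)))
  obtain ⟨j, hj, hjmax⟩ := ({k | y k ≠ 0} : Finset (Fin n)).exists_max_image id
    (by simpa [Finset.Nonempty, funext_iff] using hy0)
  simp only [mem_filter, mem_univ, true_and, id] at hj hjmax
  refine mem_closedNbhd.2 ⟨update y j 0, ?_, hammingDist_comm y _ ▸ hammingDist_update_le y j 0⟩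
  rcases (hammingNorm_le_of_halesLT hyx).lt_or_eq with hw | hw
  · refine hD hu (halesLT_of_hammingNorm_lt ?_)
    have := hammingNorm_update_zero_add_one hj
    have := hammingNorm_update_zero_add_one hxi
    omega
  · rcases halesLT_or_eq_update_zero hyx hw hxi hj hjmax with h | h
    · exact hD hu h
    · exact h ▸ hu

def initSegNbhdCard (n t : ℕ) : ℕ := #(closedNbhd (initSeg halesLT t : Finset (Cube n)))

section Slice

variable (i : Fin (n + 1)) (b : ZMod 2) (A : Finset (Cube (n + 1)))

def slice : Finset (Cube n) := {z | i.insertNth b z ∈ A}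

@[simp] lemma mem_slice {z : Cube n} : z ∈ slice i b A ↔ i.insertNth b z ∈ A := by simp [slice]

lemma sum_eq_sum_sum_slice (f : Cube (n + 1) → ℕ) :
    ∑ x ∈ A, f x = ∑ b, ∑ z ∈ slice i b A, f (i.insertNth b z) := by
  rw [← sum_fiberwise A (· i) f]
  refine sum_congr rfl fun b _ => ?_
  have hins : ∀ x ∈ A.filter (· i = b), i.insertNth b (i.removeNth x) = x := fun x hx => by
    obtain ⟨-, rfl⟩ := mem_filter.1 hx
    exact Fin.insertNth_self_removeNth i x
  refine sum_nbij' i.removeNth (i.insertNth (α := fun _ ↦ ZMod 2) b) (fun x hx => ?_)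
    (fun z hz => by simpa using hz) hins (fun z _ => by simp) (fun x hx => by rw [hins x hx])
  simpa [hins x hx] using (mem_filter.1 hx).1

lemma card_eq_sum_card_slice : #A = ∑ b, #(slice i b A) := by
  simpa using sum_eq_sum_sum_slice i A 1

lemma slice_closedNbhd :
    slice i b (closedNbhd A) = closedNbhd (slice i b A) ∪ slice i (b + 1) A := by
  ext z
  simp only [mem_slice, mem_closedNbhd, mem_union]
  constructor
  · rintro ⟨u, hu, hd⟩
    rw [← Fin.insertNth_self_removeNth i u, hammingDist_insertNth] at hd
    rw [← Fin.insertNth_self_removeNth i u] at hu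
    by_cases hb : u i = b
    · exact Or.inl ⟨i.removeNth u, hb ▸ hu, by simpa [hb] using hd⟩
    · simp only [hb, if_false, add_le_iff_nonpos_left, nonpos_iff_eq_zero,
        hammingDist_eq_zero] at hd
      rw [hd, zmod_two_eq_add_one_of_ne hb] at hu
      exact Or.inr hu
  · rintro (⟨w, hw, hd⟩ | hz)
    · exact ⟨i.insertNth b w, hw, by simpa [hammingDist_insertNth] using hd⟩
    · exact ⟨i.insertNth (b + 1) z, hz, by simp [hammingDist_insertNth]⟩

def compress : Finset (Cube (n + 1)) := {x | i.removeNth x ∈ initSeg halesLT #(slice i (x i) A)}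

lemma slice_compress : slice i b (compress i A) = initSeg halesLT #(slice i b A) := by
  ext z; simp [compress]

lemma card_compress : #(compress i A) = #A := by
  simp only [card_eq_sum_card_slice i, slice_compress, card_initSeg_card]

lemma card_closedNbhd_compress_le
    (ih : ∀ B : Finset (Cube n), initSegNbhdCard n #B ≤ #(closedNbhd B)) :
    #(closedNbhd (compress i A)) ≤ #(closedNbhd A) := by
  rw [card_eq_sum_card_slice i (closedNbhd _), card_eq_sum_card_slice i (closedNbhd A)]
  refine sum_le_sum fun b _ => ?_
  rw [slice_closedNbhd, slice_compress, slice_compress,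
    ((isDownClosed_initSeg _).closedNbhd).card_union (isDownClosed_initSeg _), card_initSeg_card]
  exact max_le ((ih _).trans (card_le_card (slice_closedNbhd i b A ▸ subset_union_left)))
    (card_le_card (slice_closedNbhd i b A ▸ subset_union_right))

lemma sum_rank_compress_lt (h : ¬ IsDownClosed halesLT (slice i b A)) :
    ∑ x ∈ compress i A, rank halesLT x < ∑ x ∈ A, rank halesLT x := by
  have hmono (c : ZMod 2) ⦃z z' : Cube n⦄ (hz : halesLT z z') :
      rank halesLT (i.insertNth c z) < rank halesLT (i.insertNth c z') :=
    rank_lt_rank ((halesLT_insertNth_iff i c).2 hz)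
  rw [sum_eq_sum_sum_slice i, sum_eq_sum_sum_slice i A]
  refine sum_lt_sum (fun c _ => ?_) ⟨b, mem_univ b, ?_⟩ <;> rw [slice_compress]
  exacts [sum_initSeg_card_le (hmono c) _, sum_initSeg_card_lt (hmono b) h]

end Slice

section Complement

lemma add_one_add_one (x : Cube n) : x + 1 + 1 = x := by
  have h : ∀ a : ZMod 2, a + 1 + 1 = a := by decide
  exact funext fun i => h (x i)

lemma hammingDist_add_one_add (x y : Cube n) : hammingDist (x + 1) y + hammingDist x y = n := by
  have h : ∀ a b : ZMod 2, a + 1 ≠ b ↔ ¬ a ≠ b := by decide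
  simp only [hammingDist, Pi.add_apply, Pi.one_apply, h]
  rw [add_comm, card_filter_add_card_filter_not, card_univ, Fintype.card_fin]

lemma hammingNorm_add_one_add (x : Cube n) : hammingNorm (x + 1) + hammingNorm x = n := by
  simpa [hammingDist_zero_right] using hammingDist_add_one_add x 0

lemma hammingDist_add_one_add_one (x y : Cube n) : hammingDist (x + 1) (y + 1) = hammingDist x y :=
  hammingDist_comp (fun _ => (· + 1)) fun _ => add_left_injective 1

lemma halesLT_add_one {x y : Cube n} (h : halesLT x y) : halesLT (y + 1) (x + 1) := by
  have hx := hammingNorm_add_one_add x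
  have hy := hammingNorm_add_one_add y
  rcases halesLT_iff.1 h with h | ⟨hw, p, hbelow, hxp, hyp⟩
  · exact halesLT_of_hammingNorm_lt (by omega)
  have hone : ∀ a : ZMod 2, a ≠ 0 → a + 1 = 0 := by decide
  exact halesLT_iff.2 (Or.inr ⟨by omega, p, fun j hj => by simp [hbelow j hj], by simp [hyp],
    hone _ hxp⟩)

lemma rank_add_one_add_rank (x : Cube n) :
    rank halesLT (x + 1) + rank halesLT x + 1 = 2 ^ n := by
  rw [rank_apply_add_rank (φ := (· + 1)) add_one_add_one (fun _ _ => halesLT_add_one), card_cube]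

lemma closedNbhd_image_add_one (A : Finset (Cube n)) :
    closedNbhd (A.image (· + 1)) = (closedNbhd A).image (· + 1) := by
  ext x
  constructor
  · intro hx
    obtain ⟨_, hu', hd⟩ := mem_closedNbhd.1 hx
    obtain ⟨u, hu, rfl⟩ := mem_image.1 hu'
    refine mem_image.2 ⟨x + 1, mem_closedNbhd.2 ⟨u, hu, ?_⟩, add_one_add_one x⟩
    rwa [← hammingDist_add_one_add_one, add_one_add_one]
  · intro hx
    obtain ⟨y, hy, rfl⟩ := mem_image.1 hx
    obtain ⟨u, hu, hd⟩ := mem_closedNbhd.1 hy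
    exact mem_closedNbhd.2 ⟨u + 1, mem_image_of_mem _ hu, by rwa [hammingDist_add_one_add_one]⟩

lemma not_halesLT_one (x : Cube n) : ¬ halesLT 1 x := by
  have hone : hammingNorm (1 : Cube n) = n := by simpa using hammingNorm_add_one_add (0 : Cube n)
  rw [halesLT_iff, hone]
  rintro (h | ⟨h, i, -, -, hx⟩)
  · exact h.not_ge (hammingNorm_le_card_fintype.trans (Fintype.card_fin n).le)
  · exact h.not_gt <| (card_lt_univ_of_notMem (s := ({j | x j ≠ 0} : Finset (Fin n))) (x := i)
      (by simp [hx])).trans_eq (Fintype.card_fin n)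

lemma exists_forall_le_of_halesLT_add_one {w : Cube n} (hw : halesLT (w + 1) w)
    (hnorm : hammingNorm (w + 1) = hammingNorm w) : ∃ p, (∀ k, p ≤ k) ∧ w p = 0 := by
  obtain ⟨p, hbelow, -, hwp⟩ : ∃ p, (∀ k < p, w k + 1 = w k) ∧ w p + 1 ≠ 0 ∧ w p = 0 := by
    simpa [hnorm] using halesLT_iff.1 hw
  have h : ∀ a : ZMod 2, a + 1 ≠ a := by decide
  exact ⟨p, fun k => not_lt.1 fun hk => h _ (hbelow k hk), hwp⟩

end Complement

section Exceptional

/-- For `w + 1` below `w`, this is the shape of a set that is compressed in every direction without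
being an initial segment. -/
def exceptionalSet (w : Cube n) : Finset (Cube n) :=
  (initSeg halesLT (rank halesLT w + 1)).erase (w + 1)

variable {u w x : Cube n}

lemma mem_exceptionalSet : u ∈ exceptionalSet w ↔ u ≠ w + 1 ∧ ¬ halesLT w u := by
  rw [exceptionalSet, mem_erase, mem_initSeg_rank_add_one]

lemma add_one_mem_closedNbhd_exceptionalSet (hw : halesLT (w + 1) w) :
    w + 1 ∈ closedNbhd (exceptionalSet w) := by
  have hmem {u : Cube n} (hne : u ≠ w + 1) (hlt : ¬ halesLT w u) (hd : hammingDist (w + 1) u ≤ 1) :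
      w + 1 ∈ closedNbhd (exceptionalSet w) :=
    mem_closedNbhd.2 ⟨u, mem_exceptionalSet.2 ⟨hne, hlt⟩, hammingDist_comm u _ ▸ hd⟩
  by_cases hv : w + 1 = 0
  · have hw1 : w = 1 := by rw [← add_one_add_one w, hv, zero_add]
    obtain ⟨k, -⟩ := Function.ne_iff.1 fun h : w + 1 = w => irrefl w (h ▸ hw)
    refine hmem (u := update (w + 1) k 1) (fun h => ?_) (by rw [hw1]; exact not_halesLT_one _)
      (hammingDist_update_le _ k 1)
    have := congrFun h k
    rw [update_self, hv, Pi.zero_apply] at this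
    exact one_ne_zero this
  · obtain ⟨k, hk⟩ := Function.ne_iff.1 hv
    refine hmem (u := update (w + 1) k 0) (fun h => hk (by simpa using (congrFun h k).symm))
      (asymm (halesLT_of_hammingNorm_lt ?_)) (hammingDist_update_le _ k 0)
    have := hammingNorm_update_zero_add_one hk
    have := hammingNorm_le_of_halesLT hw
    omega

lemma mem_closedNbhd_exceptionalSet_of_update {j k : Fin n} (hxj : x j ≠ 0)
    (hvx : w + 1 = update x j 0) (hk : (w + 1) k ≠ 0) (hlt : halesLT (update x k 0) w) :
    x ∈ closedNbhd (exceptionalSet w) := by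
  have hkj : k ≠ j := by rintro rfl; rw [hvx, update_self] at hk; exact hk rfl
  refine mem_closedNbhd.2 ⟨update x k 0, mem_exceptionalSet.2 ⟨fun h => hxj ?_, asymm hlt⟩,
    hammingDist_comm x _ ▸ hammingDist_update_le x k 0⟩
  rw [← update_of_ne hkj.symm 0 x, h, hvx, update_self]

lemma mem_closedNbhd_exceptionalSet_of_halesLT (hw : halesLT (w + 1) w) (hwx : halesLT w x)
    (hx : hammingDist (w + 1) x ≤ 1) : x ∈ closedNbhd (exceptionalSet w) := by
  obtain ⟨j, hxj, hvx⟩ := (isDownClosed_initSeg (rank halesLT w + 1)).exists_eq_update_zero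
    (mem_initSeg_rank_add_one.2 (asymm hw)) (mt mem_initSeg_rank_add_one.1 (not_not.2 hwx)) hx
  have hvj : (w + 1) j = 0 := by rw [hvx, update_self]
  have hnorm {k : Fin n} (hk : (w + 1) k ≠ 0) :
      hammingNorm (update x k 0) = hammingNorm (w + 1) := by
    have hkj : k ≠ j := by rintro rfl; exact hk hvj
    have := hammingNorm_update_zero_add_one (x := x) (i := k) (by rwa [hvx, update_of_ne hkj] at hk)
    have := hvx ▸ hammingNorm_update_zero_add_one hxj
    omega
  have hv0 : w + 1 ≠ 0 := fun h =>
    not_halesLT_one x (by rwa [← add_one_add_one w, h, zero_add] at hwx)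
  rcases (hammingNorm_le_of_halesLT hw).lt_or_eq with hlt | heq
  · obtain ⟨k, hk⟩ := Function.ne_iff.1 hv0
    exact mem_closedNbhd_exceptionalSet_of_update hxj hvx hk
      (halesLT_of_hammingNorm_lt ((hnorm hk).trans_lt hlt))
  obtain ⟨p, hpmin, hwp⟩ := exists_forall_le_of_halesLT_add_one hw heq
  by_cases h1 : hammingNorm (w + 1) = 1
  · -- `n = 2`, and `w` itself is adjacent to `x`
    refine mem_closedNbhd.2 ⟨w, mem_exceptionalSet.2 ⟨fun h => irrefl w (by rwa [← h] at hw),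
      irrefl w⟩, ?_⟩
    have hvx1 : hammingDist (w + 1) x = 1 :=
      le_antisymm hx (hammingDist_pos.2 fun h => hxj (h ▸ hvj))
    have hdist := hammingDist_add_one_add (w + 1) x
    rw [add_one_add_one] at hdist
    have := hammingNorm_add_one_add w
    omega
  · have hpv : (w + 1) p ≠ 0 := by simp [hwp]
    obtain ⟨k, hk, hkp⟩ := exists_mem_ne (s := ({q | (w + 1) q ≠ 0} : Finset (Fin n)))
      (by have := hammingNorm_pos_iff.2 hv0; unfold hammingNorm at this h1; omega) p
    rw [mem_filter] at hk
    refine mem_closedNbhd_exceptionalSet_of_update hxj hvx hk.2 (halesLT_iff.2 (Or.inr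
      ⟨(hnorm hk.2).trans heq, p, fun q hq => absurd hq (not_lt.2 (hpmin q)), ?_, hwp⟩))
    have hpj : p ≠ j := by rintro rfl; exact hpv hvj
    rwa [update_of_ne hkp.symm, ← update_of_ne hpj 0 x, ← hvx]

lemma closedNbhd_initSeg_rank_subset (hw : halesLT (w + 1) w) :
    closedNbhd (initSeg halesLT (rank halesLT w)) ⊆ closedNbhd (exceptionalSet w) := by
  intro x hx
  obtain ⟨u, hu, hux⟩ := mem_closedNbhd.1 hx
  rw [mem_initSeg, rank_lt_rank_iff] at hu
  by_cases huv : u = w + 1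
  · subst huv
    by_cases hxE : x ∈ exceptionalSet w
    · exact subset_closedNbhd _ hxE
    rw [mem_exceptionalSet, not_and_or, not_not, not_not] at hxE
    rcases hxE with rfl | hwx
    · exact add_one_mem_closedNbhd_exceptionalSet hw
    · exact mem_closedNbhd_exceptionalSet_of_halesLT hw hwx hux
  · exact mem_closedNbhd.2 ⟨u, mem_exceptionalSet.2 ⟨huv, asymm hu⟩, hux⟩

end Exceptional

def IsCompressed (A : Finset (Cube (n + 1))) : Prop := ∀ i b, IsDownClosed halesLT (slice i b A)

namespace IsCompressed

variable {A : Finset (Cube (n + 1))} (hA : IsCompressed A) {x y : Cube (n + 1)}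
include hA

lemma eq_add_one (hx : x ∈ A) (hyx : halesLT y x) (hy : y ∉ A) : y = x + 1 := by
  refine funext fun j => zmod_two_eq_add_one_of_ne fun hj => hy ?_
  have hxs : j.removeNth x ∈ slice j (x j) A := by simpa [Fin.insertNth_self_removeNth] using hx
  have hyx' : halesLT (j.removeNth y) (j.removeNth x) := by
    rwa [← halesLT_insertNth_iff j (x j), Fin.insertNth_self_removeNth, ← hj,
      Fin.insertNth_self_removeNth]
  simpa [← hj, Fin.insertNth_self_removeNth] using hA j (x j) hxs hyx'

lemma eq_exceptionalSet (hx : x ∈ A) (hyx : halesLT y x) (hy : y ∉ A) :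
    A = exceptionalSet x := by
  obtain rfl := hA.eq_add_one hx hyx hy
  ext z
  rw [mem_exceptionalSet]
  constructor
  · intro hz
    refine ⟨fun h => hy (h ▸ hz), fun hxz => ?_⟩
    have := add_left_injective 1 (hA.eq_add_one hz (_root_.trans hyx hxz) hy)
    exact irrefl z (this ▸ hxz)
  · rintro ⟨hzy, hxz⟩
    rcases trichotomous_of halesLT z x with h | rfl | h
    · by_contra hz
      exact hzy (hA.eq_add_one hx h hz)
    · exact hx
    · exact absurd h hxz

lemma initSegNbhdCard_le_card_closedNbhd :
    initSegNbhdCard (n + 1) #A ≤ #(closedNbhd A) := by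
  by_cases hD : IsDownClosed halesLT A
  · rw [initSegNbhdCard, ← hD.eq_initSeg]
  obtain ⟨x, hx, y, hyx, hy⟩ : ∃ x ∈ A, ∃ y, halesLT y x ∧ y ∉ A := by
    simpa [IsDownClosed] using hD
  have hAeq := hA.eq_exceptionalSet hx hyx hy
  obtain rfl := hA.eq_add_one hx hyx hy
  have hcard : #A = rank halesLT x := by
    rw [hAeq, exceptionalSet, card_erase_of_mem (mem_initSeg_rank_add_one.2 (asymm hyx)),
      card_initSeg, min_eq_left (rank_lt_card x), Nat.add_sub_cancel]
  rw [hcard, hAeq]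
  exact card_le_card (closedNbhd_initSeg_rank_subset hyx)

end IsCompressed

theorem initSegNbhdCard_le_card_closedNbhd_succ
    (ih : ∀ B : Finset (Cube n), initSegNbhdCard n #B ≤ #(closedNbhd B))
    (A : Finset (Cube (n + 1))) : initSegNbhdCard (n + 1) #A ≤ #(closedNbhd A) := by
  by_cases hA : IsCompressed A
  · exact hA.initSegNbhdCard_le_card_closedNbhd
  obtain ⟨i, b, hib⟩ : ∃ i b, ¬ IsDownClosed halesLT (slice i b A) := by
    simpa [IsCompressed] using hA
  have := sum_rank_compress_lt i b A hib
  calc initSegNbhdCard (n + 1) #A = initSegNbhdCard (n + 1) #(compress i A) := by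
        rw [card_compress]
    _ ≤ #(closedNbhd (compress i A)) := initSegNbhdCard_le_card_closedNbhd_succ ih _
    _ ≤ #(closedNbhd A) := card_closedNbhd_compress_le i A ih
termination_by ∑ x ∈ A, rank halesLT x

/-- Harper's vertex-isoperimetric inequality. -/
theorem initSegNbhdCard_le_card_closedNbhd :
    ∀ {n : ℕ} (A : Finset (Cube n)), initSegNbhdCard n #A ≤ #(closedNbhd A)
  | 0, A => by rw [initSegNbhdCard, ← (isDownClosed_of_subsingleton A).eq_initSeg]
  | _ + 1, A => initSegNbhdCard_le_card_closedNbhd_succ initSegNbhdCard_le_card_closedNbhd A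

lemma initSegNbhdCard_le (n t : ℕ) : initSegNbhdCard n t ≤ 2 ^ n :=
  card_cube (n := n) ▸ card_le_univ _

lemma min_le_initSegNbhdCard (n t : ℕ) : min t (2 ^ n) ≤ initSegNbhdCard n t :=
  card_cube (n := n) ▸ card_initSeg (r := halesLT) t ▸ card_le_card (subset_closedNbhd _)

lemma initSegNbhdCard_add_le (n a b : ℕ) :
    initSegNbhdCard n (a + b) ≤ initSegNbhdCard n a + initSegNbhdCard n b := by
  rcases le_or_gt (a + b) (2 ^ n) with hab | hab
  · set I : ℕ → Finset (Cube n) := initSeg halesLT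
    -- `(I b).image (· + 1)` consists of the last `b` vertices
    have hdisj : Disjoint (I a) ((I b).image (· + 1)) := by
      refine disjoint_left.2 fun z hz hz' => ?_
      obtain ⟨t, ht, rfl⟩ := mem_image.1 hz'
      have := rank_add_one_add_rank t
      simp only [I, mem_initSeg] at hz ht
      omega
    have hcard : #(I a ∪ (I b).image (· + 1)) = a + b := by
      rw [card_union_of_disjoint hdisj, card_image_of_injective _ (add_left_injective 1),
        card_initSeg, card_initSeg, card_cube]
      omega
    calc initSegNbhdCard n (a + b) ≤ #(closedNbhd (I a ∪ (I b).image (· + 1))) :=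
          hcard ▸ initSegNbhdCard_le_card_closedNbhd _
      _ ≤ #(closedNbhd (I a)) + #(closedNbhd ((I b).image (· + 1))) := by
        rw [closedNbhd_union]; exact card_union_le _ _
      _ = initSegNbhdCard n a + initSegNbhdCard n b := by
        rw [closedNbhd_image_add_one, card_image_of_injective _ (add_left_injective 1)]; rfl
  · have := initSegNbhdCard_le n (a + b)
    have := min_le_initSegNbhdCard n a
    have := min_le_initSegNbhdCard n b
    generalize 2 ^ n = N at *
    omega

lemma initSegNbhdCard_le_succ (n a : ℕ) : initSegNbhdCard n a ≤ initSegNbhdCard (n + 1) a := by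
  set A : Finset (Cube (n + 1)) := initSeg halesLT a
  -- both are the first `min a (2 ^ n)` vertices of `Cube n`
  have hA : (initSeg halesLT a : Finset (Cube n)) = initSeg halesLT (∑ b, #(slice 0 b A)) := by
    rw [← card_eq_sum_card_slice, ← initSeg_min_card a, ← initSeg_min_card #A, card_initSeg,
      card_cube, card_cube, pow_succ]
    congr 1
    omega
  calc initSegNbhdCard n a = initSegNbhdCard n (∑ b, #(slice 0 b A)) := by
        rw [initSegNbhdCard, hA]; rfl
    _ ≤ ∑ b, initSegNbhdCard n #(slice 0 b A) :=
        le_sum_of_subadditive (initSegNbhdCard n) (by simp [initSegNbhdCard, closedNbhd, initSeg])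
          (initSegNbhdCard_add_le n) _ _
    _ ≤ ∑ b, #(closedNbhd (slice 0 b A)) :=
        sum_le_sum fun b _ => initSegNbhdCard_le_card_closedNbhd _
    _ ≤ ∑ b, #(slice 0 b (closedNbhd A)) :=
        sum_le_sum fun b _ => card_le_card (slice_closedNbhd 0 b A ▸ subset_union_left)
    _ = initSegNbhdCard (n + 1) a := (card_eq_sum_card_slice 0 _).symm

lemma initSegNbhdCard_mono_left (a : ℕ) : Monotone (initSegNbhdCard · a) :=
  monotone_nat_of_le_succ fun n => initSegNbhdCard_le_succ n a

lemma halesInit_eq (m a : ℕ) : halesInit m a = ↑(initSeg halesLT a : Finset (Cube m)) := by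
  ext x
  simp [halesInit, rank, Nat.card_eq_fintype_card, Fintype.card_subtype]

lemma outerBoundary_coe (A : Finset (Cube n)) :
    outerBoundary (A : Set (Cube n)) = ↑(closedNbhd A \ A) := by
  ext v
  simp only [outerBoundary, Set.mem_ofPred_eq, coe_sdiff, Set.mem_sdiff, mem_coe, mem_closedNbhd]
  constructor
  · rintro ⟨hv, u, hu, hd⟩
    exact ⟨⟨u, hu, hd.le⟩, hv⟩
  · rintro ⟨⟨u, hu, hd⟩, hv⟩
    exact ⟨hv, u, hu, le_antisymm hd (hammingDist_pos.2 (ne_of_mem_of_not_mem hu hv))⟩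

lemma card_outerBoundary_halesInit (m a : ℕ) :
    Nat.card (outerBoundary (halesInit m a)) = initSegNbhdCard m a - min a (2 ^ m) := by
  rw [halesInit_eq, outerBoundary_coe, Nat.card_coe_set_eq, Set.ncard_coe_finset,
    card_sdiff_of_subset (subset_closedNbhd _), card_initSeg, card_cube, initSegNbhdCard]

end Cube

open Cube

theorem stmt_15_general (m M a : ℕ) (hM : m ≤ M) :
    Nat.card (outerBoundary (halesInit m a)) ≤ Nat.card (outerBoundary (halesInit M a)) := by
  rw [card_outerBoundary_halesInit, card_outerBoundary_halesInit]
  have hmono : initSegNbhdCard m a ≤ initSegNbhdCard M a := initSegNbhdCard_mono_left a hM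
  have hle := initSegNbhdCard_le m a
  have hpow := Nat.pow_le_pow_right two_pos hM
  omega

theorem stmt_15 (m M a : ℕ) (hM : m ≤ M) (ha : a ≤ 2 ^ m) :
    Nat.card (outerBoundary (halesInit m a)) ≤ Nat.card (outerBoundary (halesInit M a)) :=
  stmt_15_general m M a hM
end

section
/- If n = 2^m − 1 for some m ≥ 1, then {0,1}^n can be partitioned into disjoint Hamming balls of radius 1: there exists a set C ⊆ F₂ⁿ of size 2^n/(n+1) such that every x ∈ F₂ⁿ is within Hamming distance 1 of exactly one element of C. -/
/-!
Take as parity-check matrix the `m × n` matrix whose columns are the `n = 2^m - 1` nonzero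
vectors of `F₂^m`, and as code `C` its kernel. A word `x` is within distance one of `c ∈ C`
exactly when `y = x - c` has weight at most one and the same syndrome as `x`. The words of weight
at most one are `0` and the `n` unit vectors, whose syndromes are `0` and the `n` columns: every
vector of `F₂^m` exactly once. So `c` exists and is unique, the syndrome map is onto, and
`|C| = 2^n / 2^m = 2^n / (n + 1)`.
-/

theorem LinearMap.card_ker_mul_card_of_surjective {R M N : Type*} [Ring R] [AddCommGroup M]
    [AddCommGroup N] [Module R M] [Module R N] (f : M →ₗ[R] N) (hf : Function.Surjective f) :
    Nat.card (ker f) * Nat.card N = Nat.card M := by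
  rw [← f.toAddMonoidHom.ker.card_mul_index, AddSubgroup.index_ker,
    f.toAddMonoidHom.range_eq_top.mpr hf, AddSubgroup.card_top]
  rfl

namespace HammingCode

variable {ι V : Type*} [Fintype ι] [DecidableEq ι] [AddCommGroup V] [Module (ZMod 2) V]

theorem hammingNorm_le_one_iff (y : ι → ZMod 2) :
    hammingNorm y ≤ 1 ↔ y = 0 ∨ ∃ j, y = Pi.single j 1 := by
  have hsupp : hammingNorm y ≤ 1 ↔ ∀ i, y i ≠ 0 → ∀ j, y j ≠ 0 → i = j := by
    simp [hammingNorm, Finset.card_le_one]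
  rw [hsupp]
  constructor
  · intro hy
    by_cases hy0 : y = 0
    · exact .inl hy0
    obtain ⟨j, hj⟩ := Function.ne_iff.mp hy0
    refine .inr ⟨j, funext fun k => ?_⟩
    by_cases hkj : k = j
    · subst hkj
      rw [Pi.single_eq_same]
      exact Fin.eq_one_of_ne_zero _ hj
    · simpa [hkj] using mt (hy k · j hj) hkj
  · rintro (rfl | ⟨j, rfl⟩) i hi k hk
    · exact absurd rfl hi
    · simp only [Pi.single_apply, ne_eq, ite_eq_right_iff, one_ne_zero] at hi hk
      grind

variable (e : ι ≃ {v : V // v ≠ 0})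

/-- `e i` is the `i`-th column of the parity-check matrix; the Hamming code is the kernel. -/
noncomputable def syndrome : (ι → ZMod 2) →ₗ[ZMod 2] V :=
  Fintype.linearCombination (ZMod 2) fun i ↦ (e i : V)

theorem syndrome_single (j : ι) : syndrome e (Pi.single j 1) = e j := by
  rw [syndrome, Fintype.linearCombination_apply_single, one_smul]

theorem existsUnique_hammingNorm_le_one_syndrome_eq (v : V) :
    ∃! y : ι → ZMod 2, hammingNorm y ≤ 1 ∧ syndrome e y = v := by
  simp only [hammingNorm_le_one_iff]
  by_cases hv : v = 0
  · subst hv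
    refine ⟨0, ⟨.inl rfl, map_zero _⟩, ?_⟩
    rintro y ⟨rfl | ⟨j, rfl⟩, hy⟩
    · rfl
    · exact absurd ((syndrome_single e j).symm.trans hy) (e j).2
  · refine ⟨Pi.single (e.symm ⟨v, hv⟩) 1, ⟨.inr ⟨_, rfl⟩, by simp [syndrome_single]⟩, ?_⟩
    rintro y ⟨rfl | ⟨j, rfl⟩, hy⟩
    · exact absurd (hy.symm.trans (map_zero _)) hv
    · rw [syndrome_single] at hy
      rw [e.eq_symm_apply.mpr (Subtype.ext hy : e j = ⟨v, hv⟩)]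

theorem syndrome_surjective : Function.Surjective (syndrome e) :=
  fun v ↦ (existsUnique_hammingNorm_le_one_syndrome_eq e v).exists.imp fun _ ↦ And.right

theorem existsUnique_mem_ker_hammingDist_le_one (x : ι → ZMod 2) :
    ∃! c, c ∈ LinearMap.ker (syndrome e) ∧ hammingDist x c ≤ 1 := by
  refine ((Equiv.subLeft x).existsUnique_congr fun c ↦ ?_).mpr
    (existsUnique_hammingNorm_le_one_syndrome_eq e (syndrome e x))
  rw [Equiv.subLeft_apply, map_sub, sub_eq_self, hammingDist_comm, hammingDist_eq_hammingNorm,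
    neg_add_eq_sub, LinearMap.mem_ker, and_comm]

end HammingCode

theorem stmt_19_general (m n : ℕ) (hn : n = 2 ^ m - 1) :
    ∃ C : Finset (Fin n → ZMod 2),
      C.card = 2 ^ n / (n + 1) ∧
      ∀ x : Fin n → ZMod 2, ∃! c : Fin n → ZMod 2, c ∈ C ∧ hammingDist x c ≤ 1 := by
  classical
  have hcard : Fintype.card (Fin n) = Fintype.card {v : Fin m → ZMod 2 // v ≠ 0} := by
    simp [Fintype.card_subtype_compl, hn, ZMod.card]
  set e := Fintype.equivOfCardEq hcard
  refine ⟨(LinearMap.ker (HammingCode.syndrome e) : Set (Fin n → ZMod 2)).toFinset, ?_,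
    by simpa using HammingCode.existsUnique_mem_ker_hammingDist_le_one e⟩
  have hker := (HammingCode.syndrome e).card_ker_mul_card_of_surjective
    (HammingCode.syndrome_surjective e)
  have hpow : n + 1 = 2 ^ m := by have := Nat.one_le_two_pow (n := m); omega
  rw [Nat.card_fun, Nat.card_fun, Nat.card_zmod, Nat.card_fin, Nat.card_fin] at hker
  rw [Set.toFinset_card, ← Nat.card_eq_fintype_card, SetLike.coe_sort_coe, hpow, ← hker,
    Nat.mul_div_cancel _ (by positivity)]

theorem stmt_19 (m n : ℕ) (hm : 1 ≤ m) (hn : n = 2 ^ m - 1) :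
    ∃ C : Finset (Fin n → ZMod 2),
      C.card = 2 ^ n / (n + 1) ∧
      ∀ x : Fin n → ZMod 2, ∃! c : Fin n → ZMod 2, c ∈ C ∧ hammingDist x c ≤ 1 :=
  stmt_19_general m n hn
end
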